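/- arXiv:1404.6794 — 10 statements merged into one kernel-verified Lean document; each statement's English description precedes it below -/
import Mathlib

section
/- Fix a nonzero scalar q ∈ F that is not a root of unity, and scalars α, α*, a, a′, b, b′, c ∈ F with c ≠ 0. Define θ_i = α + a·q^{2i−d} + a′·q^{d−2i} and θ*_i = α* + b·q^{2i−d} + b′·q^{d−2i} for 0 ≤ i ≤ d, and for 1 ≤ i ≤ d define φ_i = (q^i − q^{−i})(q^{d−i+1} − q^{i−d−1})(b − a′c·q^{d−2i+1})(b′ − ac·q^{2i−d−1})c^{−1} and φ̂_i = (q^i − q^{−i})(q^{d−i+1} − q^{i−d−1})(b − ac·q^{d−2i+1})(b′ − a′c·q^{2i−d−1})c^{−1}. Then ({θ_i}_{i=0}^d, {θ*_i}_{i=0}^d, {φ_i}_{i=1}^d, {φ̂_i}_{i=1}^d) is a parameter array over F if and only if the following three conditions hold: (C1) a ≠ a′q^{2d−2j} for 1 ≤ j ≤ 2d−1; (C2) b ≠ b′q^{2d−2j} for 1 ≤ j ≤ 2d−1; (C3) neither b·c^{−1} nor b′·c^{−1} belongs to {a·q^{d−2j+1} : 1 ≤ j ≤ d} ∪ {a′·q^{d−2j+1}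 : 1 ≤ j ≤ d}. -/
/-- A parameter array over `F` (Definition 3.1 of the paper). -/
def IsParameterArray {F : Type*} [Field F] (d : ℕ)
    (θ θs φ φh : ℕ → F) : Prop :=
  (∀ i j : ℕ, i ≤ d → j ≤ d → i ≠ j → θ i ≠ θ j ∧ θs i ≠ θs j) ∧
  (∀ i : ℕ, 1 ≤ i → i ≤ d → φ i ≠ 0 ∧ φh i ≠ 0) ∧
  (∀ i : ℕ, 1 ≤ i → i ≤ d →
    φ i = φh 1 * (∑ h ∈ Finset.range i, (θ h - θ (d - h)) / (θ 0 - θ d)) +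
      (θs i - θs 0) * (θ (i - 1) - θ d)) ∧
  (∀ i : ℕ, 1 ≤ i → i ≤ d →
    φh i = φ 1 * (∑ h ∈ Finset.range i, (θ h - θ (d - h)) / (θ 0 - θ d)) +
      (θs i - θs 0) * (θ (d - i + 1) - θ 0)) ∧
  (∀ i : ℕ, 2 ≤ i → i ≤ d - 1 →
    (θ (i - 2) - θ (i + 1)) / (θ (i - 1) - θ i) =
      (θs (i - 2) - θs (i + 1)) / (θs (i - 1) - θs i)) ∧
  (∀ i j : ℕ, 2 ≤ i → i ≤ d - 1 → 2 ≤ j → j ≤ d - 1 →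
    (θ (i - 2) - θ (i + 1)) / (θ (i - 1) - θ i) =
      (θ (j - 2) - θ (j + 1)) / (θ (j - 1) - θ j))

/-!
Writing `θ_i - θ_j = (q^(2i-d) - q^(2j-d)) (a - a' q^(2d-2(i+j)))`, distinctness of the `θ_i`
is exactly (C1), and likewise for `θ*` and (C2); since `φ_i` and `φ̂_i` are given in factored
form, their nonvanishing is exactly (C3). The remaining axioms hold identically once `a ≠ a'`:
the `θ_i` satisfy the three-term recurrence with `β = q² + q⁻²`, and the partial sums
`∑_{h<i} (θ_h - θ_{d-h}) / (θ_0 - θ_d)` telescope to `W_i / W_1`, where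
`W_i = (q^i - q^(-i)) (q^(d-i+1) - q^(i-d-1))` is the common first factor of `φ_i` and `φ̂_i`.
Then (iii) is a Laurent polynomial identity, and (iv) is (iii) with `a` and `a'` exchanged,
which reverses the sequence `θ`.
-/

open Finset

section QRacah

variable {F : Type*} [Field F]

theorem zpow_injective_of_pow_ne_one {q : F} (hq : q ≠ 0) (h : ∀ n : ℕ, 1 ≤ n → q ^ n ≠ 1) :
    Function.Injective (fun n : ℤ => q ^ n) := by
  have : ¬IsOfFinOrder (Units.mk0 q hq) := by
    rw [isOfFinOrder_iff_pow_eq_one]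
    rintro ⟨n, hn, hqn⟩
    exact h n hn (by simpa [Units.ext_iff] using hqn)
  intro m n hmn
  exact injective_zpow_iff_not_isOfFinOrder.mpr this (Units.ext (by simpa using hmn))

theorem ne_zero_of_zpow_injective {q : F} (hinj : Function.Injective (fun n : ℤ => q ^ n)) :
    q ≠ 0 := by
  rintro rfl
  exact absurd (hinj (a₁ := 1) (a₂ := 2) (by simp)) (by norm_num)

def qRacahEigenvalue (q x y z : F) (d i : ℕ) : F :=
  x + y * q ^ (2 * (i : ℤ) - d) + z * q ^ ((d : ℤ) - 2 * i)

def qRacahWeight (q : F) (d i : ℕ) : F :=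
  (q ^ (i : ℤ) - q ^ (-(i : ℤ))) * (q ^ ((d : ℤ) - i + 1) - q ^ ((i : ℤ) - d - 1))

/-- `φ_i` is `qRacahSplit q a a' b b' c d i` and `φ̂_i` is `qRacahSplit q a' a b b' c d i`. -/
def qRacahSplit (q a a' b b' c : F) (d i : ℕ) : F :=
  qRacahWeight q d i * (b - a' * c * q ^ ((d : ℤ) - 2 * i + 1)) *
    (b' - a * c * q ^ (2 * (i : ℤ) - d - 1)) * c⁻¹

section Identities

variable {q : F} (hq : q ≠ 0)
include hq

theorem qRacahEigenvalue_sub (x y z : F) (d i j : ℕ) :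
    qRacahEigenvalue q x y z d i - qRacahEigenvalue q x y z d j =
      (q ^ (2 * (i : ℤ) - d) - q ^ (2 * (j : ℤ) - d)) *
        (y - z * q ^ (2 * (d : ℤ) - 2 * (i + j))) := by
  simp only [qRacahEigenvalue, zpow_add₀ hq, zpow_sub₀ hq, zpow_mul', zpow_natCast, zpow_ofNat]
  field_simp
  ring

theorem qRacahEigenvalue_sub_reflect (x y z : F) {d h : ℕ} (hh : h ≤ d) :
    qRacahEigenvalue q x y z d h - qRacahEigenvalue q x y z d (d - h) =
      (q ^ (2 * (h : ℤ) - d) - q ^ ((d : ℤ) - 2 * h)) * (y - z) := by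
  simp only [qRacahEigenvalue, Nat.cast_sub hh, zpow_sub₀ hq, zpow_mul', zpow_natCast, zpow_ofNat]
  field_simp
  ring

theorem qRacahEigenvalue_three_term (x y z : F) (d k : ℕ) :
    qRacahEigenvalue q x y z d k - qRacahEigenvalue q x y z d (k + 3) =
      (q ^ 2 + 1 + q⁻¹ ^ 2) *
        (qRacahEigenvalue q x y z d (k + 1) - qRacahEigenvalue q x y z d (k + 2)) := by
  simp only [qRacahEigenvalue]
  push_cast
  simp only [zpow_add₀ hq, zpow_sub₀ hq, zpow_mul', zpow_natCast, zpow_ofNat, mul_add]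
  field_simp
  ring

theorem qRacahEigenvalue_ratio (x y z : F) {d i : ℕ} (hi : 2 ≤ i)
    (hne : qRacahEigenvalue q x y z d (i - 1) ≠ qRacahEigenvalue q x y z d i) :
    (qRacahEigenvalue q x y z d (i - 2) - qRacahEigenvalue q x y z d (i + 1)) /
        (qRacahEigenvalue q x y z d (i - 1) - qRacahEigenvalue q x y z d i) =
      q ^ 2 + 1 + q⁻¹ ^ 2 := by
  obtain ⟨k, rfl⟩ := Nat.exists_eq_add_of_le' hi
  rw [Nat.add_sub_cancel, Nat.add_sub_assoc (by norm_num)] at *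
  rw [qRacahEigenvalue_three_term hq, mul_div_assoc, div_self (sub_ne_zero.mpr hne), mul_one]

theorem qRacahWeight_succ_sub (d i : ℕ) :
    qRacahWeight q d (i + 1) - qRacahWeight q d i =
      (q - q⁻¹) * (q ^ ((d : ℤ) - 2 * i) - q ^ (2 * (i : ℤ) - d)) := by
  simp only [qRacahWeight]
  push_cast
  simp only [zpow_add₀ hq, zpow_sub₀ hq, zpow_neg, zpow_mul', zpow_natCast, zpow_ofNat]
  field_simp
  ring

end Identities

theorem qRacahEigenvalue_swap (q x y z : F) {d j : ℕ} (hj : j ≤ d) :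
    qRacahEigenvalue q x z y d j = qRacahEigenvalue q x y z d (d - j) := by
  simp only [qRacahEigenvalue, Nat.cast_sub hj]
  rw [show 2 * ((d : ℤ) - j) - d = d - 2 * j by ring,
    show (d : ℤ) - 2 * (d - j) = 2 * j - d by ring]
  ring

theorem qRacahWeight_zero (q : F) (d : ℕ) : qRacahWeight q d 0 = 0 := by
  simp [qRacahWeight]

theorem qRacahWeight_one (q : F) (d : ℕ) :
    qRacahWeight q d 1 = (q - q⁻¹) * (q ^ (d : ℤ) - q ^ (-(d : ℤ))) := by
  simp only [qRacahWeight, Nat.cast_one, zpow_one, zpow_neg, sub_add_cancel]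
  rw [show (1 : ℤ) - d - 1 = -d by ring, zpow_neg]

theorem sum_qRacahEigenvalue_div {q : F} (hq : q ≠ 0) {x y z : F} (hyz : y ≠ z) {d : ℕ}
    (hW : qRacahWeight q d 1 ≠ 0) {i : ℕ} (hi : i ≤ d) :
    ∑ h ∈ range i, (qRacahEigenvalue q x y z d h - qRacahEigenvalue q x y z d (d - h)) /
        (qRacahEigenvalue q x y z d 0 - qRacahEigenvalue q x y z d d) =
      qRacahWeight q d i / qRacahWeight q d 1 := by
  have hQ : q - q⁻¹ ≠ 0 := by rw [qRacahWeight_one] at hW; exact left_ne_zero_of_mul hW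
  have hterm : ∀ h ∈ range i,
      (qRacahEigenvalue q x y z d h - qRacahEigenvalue q x y z d (d - h)) /
          (qRacahEigenvalue q x y z d 0 - qRacahEigenvalue q x y z d d) =
        (qRacahWeight q d (h + 1) - qRacahWeight q d h) / qRacahWeight q d 1 := by
    intro h hh
    have h0 := qRacahEigenvalue_sub_reflect hq x y z d.zero_le
    simp only [Nat.sub_zero, Nat.cast_zero, mul_zero, zero_sub, sub_zero] at h0
    rw [qRacahWeight_succ_sub hq, qRacahWeight_one, h0,
      qRacahEigenvalue_sub_reflect hq _ _ _ (by have := mem_range.mp hh; omega),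
      mul_div_mul_right _ _ (sub_ne_zero.mpr hyz), mul_div_mul_left _ _ hQ, ← neg_sub,
      ← neg_sub (q ^ (d : ℤ)), neg_div_neg_eq]
  rw [sum_congr rfl hterm, ← sum_div, sum_range_sub, qRacahWeight_zero, sub_zero]

theorem qRacahSplit_eq {q c : F} (hq : q ≠ 0) (hc : c ≠ 0) (x xs a a' b b' : F) {d : ℕ}
    (hW : qRacahWeight q d 1 ≠ 0) {i : ℕ} (hi : 1 ≤ i) :
    qRacahSplit q a a' b b' c d i =
      qRacahSplit q a' a b b' c d 1 * (qRacahWeight q d i / qRacahWeight q d 1) +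
        (qRacahEigenvalue q xs b b' d i - qRacahEigenvalue q xs b b' d 0) *
          (qRacahEigenvalue q x a a' d (i - 1) - qRacahEigenvalue q x a a' d d) := by
  obtain ⟨k, rfl⟩ := Nat.exists_eq_add_of_le' hi
  have hcancel : ∀ u : F, qRacahWeight q d 1 * u * (qRacahWeight q d (k + 1) / qRacahWeight q d 1) =
      qRacahWeight q d (k + 1) * u := fun u => by field_simp
  simp only [qRacahSplit, mul_assoc, hcancel, Nat.add_sub_cancel]
  simp only [qRacahWeight, qRacahEigenvalue]
  push_cast
  simp only [zpow_add₀ hq, zpow_sub₀ hq, zpow_neg, zpow_mul', zpow_natCast, zpow_ofNat, mul_add]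
  field_simp
  ring

section NonRootOfUnity

variable {q : F} (hinj : Function.Injective (fun n : ℤ => q ^ n))
include hinj

theorem qRacahEigenvalue_pairwise_ne_iff (x y z : F) (d : ℕ) :
    (∀ i j : ℕ, i ≤ d → j ≤ d → i ≠ j →
        qRacahEigenvalue q x y z d i ≠ qRacahEigenvalue q x y z d j) ↔
      ∀ j : ℕ, 1 ≤ j → j ≤ 2 * d - 1 → y ≠ z * q ^ (2 * (d : ℤ) - 2 * (j : ℤ)) := by
  have hq := ne_zero_of_zpow_injective hinj
  constructor
  · intro h j hj1 hj2 hyz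
    obtain ⟨i₁, i₂, h₁, h₂, hne, rfl⟩ : ∃ i₁ i₂, i₁ ≤ d ∧ i₂ ≤ d ∧ i₁ ≠ i₂ ∧ i₁ + i₂ = j := by
      rcases le_or_gt j d with hjd | hjd
      exacts [⟨0, j, by omega⟩, ⟨j - d, d, by omega⟩]
    apply h i₁ i₂ h₁ h₂ hne
    rw [← sub_eq_zero, qRacahEigenvalue_sub hq, ← Nat.cast_add, ← hyz, sub_self, mul_zero]
  · intro h i j hi hj hij
    rw [← sub_ne_zero, qRacahEigenvalue_sub hq, ← Nat.cast_add]
    exact mul_ne_zero (sub_ne_zero.mpr (hinj.ne (by omega)))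
      (sub_ne_zero.mpr (h _ (by omega) (by omega)))

theorem qRacahWeight_ne_zero {d i : ℕ} (hi : 1 ≤ i) (hid : i ≤ d) : qRacahWeight q d i ≠ 0 :=
  mul_ne_zero (sub_ne_zero.mpr (hinj.ne (by omega))) (sub_ne_zero.mpr (hinj.ne (by omega)))

theorem qRacahSplit_ne_zero_iff {c : F} (hc : c ≠ 0) (a a' b b' : F) {d i : ℕ} (hi : 1 ≤ i)
    (hid : i ≤ d) :
    qRacahSplit q a a' b b' c d i ≠ 0 ↔
      b * c⁻¹ ≠ a' * q ^ ((d : ℤ) - 2 * i + 1) ∧ b' * c⁻¹ ≠ a * q ^ (2 * (i : ℤ) - d - 1) := by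
  have sub_mul_ne_zero_iff : ∀ u v t : F, u - v * c * t ≠ 0 ↔ u * c⁻¹ ≠ v * t := fun u v t => by
    rw [sub_ne_zero, ne_eq, ne_eq, mul_inv_eq_iff_eq_mul₀ hc, mul_right_comm]
  simp only [qRacahSplit, mul_ne_zero_iff, sub_mul_ne_zero_iff,
    and_iff_right (qRacahWeight_ne_zero hinj hi hid),    and_iff_left (inv_ne_zero hc)]

/-- The conditions on `b'` come out at the index `d + 1 - j`, where `2 i - d - 1` becomes
`d - 2 j + 1`. -/
theorem qRacahSplit_pair_ne_zero_iff {c : F} (hc : c ≠ 0) (a a' b b' : F) (d : ℕ) :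
    (∀ i : ℕ, 1 ≤ i → i ≤ d →
        qRacahSplit q a a' b b' c d i ≠ 0 ∧ qRacahSplit q a' a b b' c d i ≠ 0) ↔
      ∀ j : ℕ, 1 ≤ j → j ≤ d →
        b * c⁻¹ ≠ a * q ^ ((d : ℤ) - 2 * (j : ℤ) + 1) ∧
        b * c⁻¹ ≠ a' * q ^ ((d : ℤ) - 2 * (j : ℤ) + 1) ∧
        b' * c⁻¹ ≠ a * q ^ ((d : ℤ) - 2 * (j : ℤ) + 1) ∧
        b' * c⁻¹ ≠ a' * q ^ ((d : ℤ) - 2 * (j : ℤ) + 1) := by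
  have split_iff := fun (a a' : F) (i : ℕ) (hi : 1 ≤ i) (hid : i ≤ d) =>
    qRacahSplit_ne_zero_iff hinj hc a a' b b' hi hid
  constructor
  · intro h j hj hjd
    have hj' : 1 ≤ d + 1 - j ∧ d + 1 - j ≤ d := by omega
    obtain ⟨h₁, -⟩ := (split_iff a a' j hj hjd).1 (h j hj hjd).1
    obtain ⟨h₂, -⟩ := (split_iff a' a j hj hjd).1 (h j hj hjd).2
    obtain ⟨-, h₃⟩ := (split_iff a a' _ hj'.1 hj'.2).1 (h _ hj'.1 hj'.2).1
    obtain ⟨-, h₄⟩ := (split_iff a' a _ hj'.1 hj'.2).1 (h _ hj'.1 hj'.2).2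
    rw [show 2 * ((d + 1 - j : ℕ) : ℤ) - d - 1 = d - 2 * j + 1 by omega] at h₃ h₄
    exact ⟨h₂, h₁, h₃, h₄⟩
  · intro h i hi hid
    have hi' : 1 ≤ d + 1 - i ∧ d + 1 - i ≤ d := by omega
    obtain ⟨h₁, h₂, -⟩ := h i hi hid
    obtain ⟨-, -, h₃, h₄⟩ := h _ hi'.1 hi'.2
    rw [show (d : ℤ) - 2 * ((d + 1 - i : ℕ) : ℤ) + 1 = 2 * i - d - 1 by omega] at h₃ h₄
    exact ⟨(split_iff a a' i hi hid).2 ⟨h₂, h₃⟩, (split_iff a' a i hi hid).2 ⟨h₁, h₄⟩⟩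

end NonRootOfUnity

theorem IsParameterArray.congr {d : ℕ} {θ θs φ φh θ' θs' φ' φh' : ℕ → F}
    (hθ : ∀ i ≤ d, θ i = θ' i) (hθs : ∀ i ≤ d, θs i = θs' i)
    (hφ : ∀ i, 1 ≤ i → i ≤ d → φ i = φ' i) (hφh : ∀ i, 1 ≤ i → i ≤ d → φh i = φh' i)
    (h : IsParameterArray d θ θs φ φh) : IsParameterArray d θ' θs' φ' φh' := by
  obtain ⟨hdist, hnz, hφeq, hφheq, hrat, hconst⟩ := h
  have hsum : ∀ i ≤ d, ∑ h ∈ range i, (θ h - θ (d - h)) / (θ 0 - θ d) =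
      ∑ h ∈ range i, (θ' h - θ' (d - h)) / (θ' 0 - θ' d) := fun i hi =>
    sum_congr rfl fun h hh => by
      have := mem_range.mp hh
      rw [hθ h (by omega), hθ (d - h) (by omega), hθ 0 (by omega), hθ d le_rfl]
  refine ⟨fun i j hi hj hij => ?_, fun i hi hid => ?_, fun i hi hid => ?_, fun i hi hid => ?_,
    fun i hi hid => ?_, fun i j hi hid hj hjd => ?_⟩
  · rw [← hθ i hi, ← hθ j hj, ← hθs i hi, ← hθs j hj]
    exact hdist i j hi hj hij
  · rw [← hφ i hi hid, ← hφh i hi hid]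
    exact hnz i hi hid
  · rw [← hφ i hi hid, ← hφh 1 le_rfl (by omega), ← hsum i hid, ← hθs i hid, ← hθs 0 (by omega),
      ← hθ (i - 1) (by omega), ← hθ d le_rfl]
    exact hφeq i hi hid
  · rw [← hφ 1 le_rfl (by omega), ← hφh i hi hid, ← hsum i hid, ← hθs i hid, ← hθs 0 (by omega),
      ← hθ (d - i + 1) (by omega), ← hθ 0 (by omega)]
    exact hφheq i hi hid
  · rw [← hθ (i - 2) (by omega), ← hθ (i + 1) (by omega), ← hθ (i - 1) (by omega),
      ← hθ i (by omega), ← hθs (i - 2) (by omega), ← hθs (i + 1) (by omega),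
      ← hθs (i - 1) (by omega), ← hθs i (by omega)]
    exact hrat i hi hid
  · rw [← hθ (i - 2) (by omega), ← hθ (i + 1) (by omega), ← hθ (i - 1) (by omega),
      ← hθ i (by omega), ← hθ (j - 2) (by omega), ← hθ (j + 1) (by omega),
      ← hθ (j - 1) (by omega), ← hθ j (by omega)]
    exact hconst i j hi hid hj hjd

theorem isParameterArray_congr {d : ℕ} {θ θs φ φh θ' θs' φ' φh' : ℕ → F}
    (hθ : ∀ i ≤ d, θ i = θ' i) (hθs : ∀ i ≤ d, θs i = θs' i)
    (hφ : ∀ i, 1 ≤ i → i ≤ d → φ i = φ' i) (hφh : ∀ i, 1 ≤ i → i ≤ d → φh i = φh' i) :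
    IsParameterArray d θ θs φ φh ↔ IsParameterArray d θ' θs' φ' φh' :=
  ⟨.congr hθ hθs hφ hφh, .congr (fun i hi => (hθ i hi).symm) (fun i hi => (hθs i hi).symm)
    (fun i hi hid => (hφ i hi hid).symm) (fun i hi hid => (hφh i hi hid).symm)⟩

end QRacah

theorem stmt1_general {F : Type*} [Field F] {d : ℕ} (hd : 3 ≤ d)
    (q α αs a a' b b' c : F) (hq : q ≠ 0)
    (hqru : ∀ n : ℕ, 1 ≤ n → q ^ n ≠ 1) (hc : c ≠ 0)
    (θ θs φ φh : ℕ → F)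
    (hθ : ∀ i : ℕ, i ≤ d → θ i = α + a * q ^ (2 * (i : ℤ) - (d : ℤ)) + a' * q ^ ((d : ℤ) - 2 * (i : ℤ)))
    (hθs : ∀ i : ℕ, i ≤ d → θs i = αs + b * q ^ (2 * (i : ℤ) - (d : ℤ)) + b' * q ^ ((d : ℤ) - 2 * (i : ℤ)))
    (hφ : ∀ i : ℕ, 1 ≤ i → i ≤ d → φ i = (q ^ (i : ℤ) - q ^ (-(i : ℤ))) * (q ^ ((d : ℤ) - (i : ℤ) + 1) - q ^ ((i : ℤ) - (d : ℤ) - 1)) * (b - a' * c * q ^ ((d : ℤ) - 2 * (i : ℤ) + 1)) * (b' - a * c * q ^ (2 * (i : ℤ) - (d : ℤ) - 1)) * c⁻¹)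
    (hφh : ∀ i : ℕ, 1 ≤ i → i ≤ d → φh i = (q ^ (i : ℤ) - q ^ (-(i : ℤ))) * (q ^ ((d : ℤ) - (i : ℤ) + 1) - q ^ ((i : ℤ) - (d : ℤ) - 1)) * (b - a * c * q ^ ((d : ℤ) - 2 * (i : ℤ) + 1)) * (b' - a' * c * q ^ (2 * (i : ℤ) - (d : ℤ) - 1)) * c⁻¹) :
    IsParameterArray d θ θs φ φh ↔
    ((∀ j : ℕ, 1 ≤ j → j ≤ 2 * d - 1 → a ≠ a' * q ^ (2 * (d : ℤ) - 2 * (j : ℤ))) ∧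
     (∀ j : ℕ, 1 ≤ j → j ≤ 2 * d - 1 → b ≠ b' * q ^ (2 * (d : ℤ) - 2 * (j : ℤ))) ∧
     (∀ j : ℕ, 1 ≤ j → j ≤ d →
       b * c⁻¹ ≠ a * q ^ ((d : ℤ) - 2 * (j : ℤ) + 1) ∧
       b * c⁻¹ ≠ a' * q ^ ((d : ℤ) - 2 * (j : ℤ) + 1) ∧
       b' * c⁻¹ ≠ a * q ^ ((d : ℤ) - 2 * (j : ℤ) + 1) ∧
       b' * c⁻¹ ≠ a' * q ^ ((d : ℤ) - 2 * (j : ℤ) + 1))) := by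
  have hinj := zpow_injective_of_pow_ne_one hq hqru
  have hW : qRacahWeight q d 1 ≠ 0 := qRacahWeight_ne_zero hinj le_rfl (by omega)
  rw [isParameterArray_congr (θ' := qRacahEigenvalue q α a a' d)
      (θs' := qRacahEigenvalue q αs b b' d) (φ' := qRacahSplit q a a' b b' c d)
      (φh' := qRacahSplit q a' a b b' c d) hθ hθs hφ hφh,
    ← qRacahEigenvalue_pairwise_ne_iff hinj, ← qRacahEigenvalue_pairwise_ne_iff hinj,
    ← qRacahSplit_pair_ne_zero_iff hinj hc]
  constructor
  · rintro ⟨hdist, hsplit, -⟩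
    exact ⟨fun i j hi hj hij => (hdist i j hi hj hij).1,
      fun i j hi hj hij => (hdist i j hi hj hij).2, hsplit⟩
  rintro ⟨hdist, hdists, hsplit⟩
  have ha : a ≠ a' := by
    simpa using (qRacahEigenvalue_pairwise_ne_iff hinj α a a' d).1 hdist d (by omega) (by omega)
  refine ⟨fun i j hi hj hij => ⟨hdist i j hi hj hij, hdists i j hi hj hij⟩, hsplit,
    fun i hi hid => ?_, fun i hi hid => ?_, fun i hi hid => ?_, fun i j hi hid hj hjd => ?_⟩
  · rw [sum_qRacahEigenvalue_div hq ha hW hid]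
    exact qRacahSplit_eq hq hc α αs a a' b b' hW hi
  · rw [sum_qRacahEigenvalue_div hq ha hW hid, qRacahSplit_eq hq hc α αs a' a b b' hW hi,
      qRacahEigenvalue_swap _ _ _ _ (by omega : i - 1 ≤ d), qRacahEigenvalue_swap _ _ _ _ le_rfl,
      Nat.sub_self, show d - (i - 1) = d - i + 1 by omega]
  · rw [qRacahEigenvalue_ratio hq _ _ _ hi (hdist _ _ (by omega) (by omega) (by omega)),
      qRacahEigenvalue_ratio hq _ _ _ hi (hdists _ _ (by omega) (by omega) (by omega))]
  · rw [qRacahEigenvalue_ratio hq _ _ _ hi (hdist _ _ (by omega) (by omega) (by omega)),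
      qRacahEigenvalue_ratio hq _ _ _ hj (hdist _ _ (by omega) (by omega) (by omega))]

/-- Proposition 1.10 of the paper: the sequence
`(θ_i, θ*_i, φ_i, φ̂_i)` is a parameter array over `F` iff (C1)-(C3) hold. -/
theorem stmt1 {F : Type*} [Field F] [IsAlgClosed F] {d : ℕ} (hd : 3 ≤ d)
    (q α αs a a' b b' c : F) (hq : q ≠ 0)
    (hqru : ∀ n : ℕ, 1 ≤ n → q ^ n ≠ 1) (hc : c ≠ 0)
    (θ θs φ φh : ℕ → F)
    (hθ : ∀ i : ℕ, i ≤ d → θ i = α + a * q ^ (2 * (i : ℤ) - (d : ℤ)) + a' * q ^ ((d : ℤ) - 2 * (i : ℤ)))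
    (hθs : ∀ i : ℕ, i ≤ d → θs i = αs + b * q ^ (2 * (i : ℤ) - (d : ℤ)) + b' * q ^ ((d : ℤ) - 2 * (i : ℤ)))
    (hφ : ∀ i : ℕ, 1 ≤ i → i ≤ d → φ i = (q ^ (i : ℤ) - q ^ (-(i : ℤ))) * (q ^ ((d : ℤ) - (i : ℤ) + 1) - q ^ ((i : ℤ) - (d : ℤ) - 1)) * (b - a' * c * q ^ ((d : ℤ) - 2 * (i : ℤ) + 1)) * (b' - a * c * q ^ (2 * (i : ℤ) - (d : ℤ) - 1)) * c⁻¹)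
    (hφh : ∀ i : ℕ, 1 ≤ i → i ≤ d → φh i = (q ^ (i : ℤ) - q ^ (-(i : ℤ))) * (q ^ ((d : ℤ) - (i : ℤ) + 1) - q ^ ((i : ℤ) - (d : ℤ) - 1)) * (b - a * c * q ^ ((d : ℤ) - 2 * (i : ℤ) + 1)) * (b' - a' * c * q ^ (2 * (i : ℤ) - (d : ℤ) - 1)) * c⁻¹) :
    IsParameterArray d θ θs φ φh ↔
    ((∀ j : ℕ, 1 ≤ j → j ≤ 2 * d - 1 → a ≠ a' * q ^ (2 * (d : ℤ) - 2 * (j : ℤ))) ∧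
     (∀ j : ℕ, 1 ≤ j → j ≤ 2 * d - 1 → b ≠ b' * q ^ (2 * (d : ℤ) - 2 * (j : ℤ))) ∧
     (∀ j : ℕ, 1 ≤ j → j ≤ d →
       b * c⁻¹ ≠ a * q ^ ((d : ℤ) - 2 * (j : ℤ) + 1) ∧
       b * c⁻¹ ≠ a' * q ^ ((d : ℤ) - 2 * (j : ℤ) + 1) ∧
       b' * c⁻¹ ≠ a * q ^ ((d : ℤ) - 2 * (j : ℤ) + 1) ∧
       b' * c⁻¹ ≠ a' * q ^ ((d : ℤ) - 2 * (j : ℤ) + 1))) :=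
  stmt1_general hd q α αs a a' b b' c hq hqru hc θ θs φ φh hθ hθs hφ hφh
end

section
/- Let q ∈ F be nonzero and not a root of unity, and let α, a, a′ ∈ F. Define θ_i = α + a·q^{2i−d} + a′·q^{d−2i} for 0 ≤ i ≤ d, and assume θ_0,…,θ_d are mutually distinct. Set β = q² + q^{−2}, γ = −α(q − q^{−1})², and ρ = α²(q − q^{−1})² − a·a′(q² − q^{−2})². Suppose σ is a permutation of {0,1,…,d} and the sequence θ̃_i = θ_{σ(i)} satisfies both: γ = θ̃_{i−1} − β·θ̃_i + θ̃_{i+1} for 1 ≤ i ≤ d−1, and ρ = θ̃_0² − β·θ̃_0θ̃_1 + θ̃_1² − γ(θ̃_0 + θ̃_1). Then either θ̃_i = θ_i for all 0 ≤ i ≤ d, or θ̃_i = θ_{d−i} for all 0 ≤ i ≤ d. -/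
/-- Lemma 2.5 of the paper: a reordering of `θ_0, …, θ_d` satisfying the same
recurrence data is either the original ordering or its reversal. -/
theorem stmt6 {F : Type*} [Field F] [IsAlgClosed F] {d : ℕ} (hd : 3 ≤ d)
    (q α a a' : F) (hq : q ≠ 0)
    (hqru : ∀ n : ℕ, 1 ≤ n → q ^ n ≠ 1)
    (θ θt : ℕ → F)
    (hθ : ∀ i : ℕ, i ≤ d →
      θ i = α + a * q ^ (2 * (i : ℤ) - (d : ℤ)) + a' * q ^ ((d : ℤ) - 2 * (i : ℤ)))
    (hdist : ∀ i j : ℕ, i ≤ d → j ≤ d → i ≠ j → θ i ≠ θ j)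
    (β γ ρ : F)
    (hβ : β = q ^ (2 : ℤ) + q ^ (-2 : ℤ))
    (hγ : γ = -α * (q - q⁻¹) ^ 2)
    (hρ : ρ = α ^ 2 * (q - q⁻¹) ^ 2 - a * a' * (q ^ (2 : ℤ) - q ^ (-2 : ℤ)) ^ 2)
    (σ : Equiv.Perm (Fin (d + 1)))
    (hσ : ∀ i : Fin (d + 1), θt (i : ℕ) = θ ((σ i : Fin (d + 1)) : ℕ))
    (hrec : ∀ i : ℕ, 1 ≤ i → i ≤ d - 1 →
      γ = θt (i - 1) - β * θt i + θt (i + 1))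
    (hrec2 : ρ = θt 0 ^ 2 - β * θt 0 * θt 1 + θt 1 ^ 2 - γ * (θt 0 + θt 1)) :
    (∀ i : ℕ, i ≤ d → θt i = θ i) ∨ (∀ i : ℕ, i ≤ d → θt i = θ (d - i)) := by
  have hqd : (q : F) ^ d ≠ 0 := pow_ne_zero _ hq
  have hq2 : (q : F) ^ 2 ≠ 0 := pow_ne_zero _ hq
  have hq21 : (q : F) ^ 2 ≠ 1 := hqru 2 (by norm_num)
  have hq41 : (q : F) ^ 4 ≠ 1 := hqru 4 (by norm_num)
  have hz2 : q ^ (2 : ℤ) = q ^ 2 := by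
    rw [show (2:ℤ) = ((2:ℕ):ℤ) by norm_num, zpow_natCast]
  have hzm2 : q ^ (-2 : ℤ) = (q ^ 2)⁻¹ := by
    rw [show (-2:ℤ) = -((2:ℕ):ℤ) by norm_num, zpow_neg, zpow_natCast]
  have hβ' : β = q ^ 2 + (q ^ 2)⁻¹ := by rw [hβ, hz2, hzm2]
  have hD : (q ^ 2 - (q ^ 2)⁻¹ : F) ≠ 0 := by
    intro h
    apply hq41
    have h2 : (q : F) ^ 2 = (q ^ 2)⁻¹ := sub_eq_zero.mp h
    calc (q : F) ^ 4 = q ^ 2 * q ^ 2 := by ring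
      _ = q ^ 2 * (q ^ 2)⁻¹ := by rw [← h2]
      _ = 1 := mul_inv_cancel₀ hq2
  have h41 : ((q : F) ^ 4 - 1) ≠ 0 := sub_ne_zero.mpr hq41
  -- the coefficients of the closed form of θt
  set b : F := ((θt 1 - α) * q ^ 2 - (θt 0 - α)) / (q ^ 4 - 1) with hbdef
  set b' : F := (θt 0 - α) - b with hb'def
  have hφ0 : θt 0 = α + b + b' := by rw [hb'def]; ring
  have hφ1 : θt 1 = α + b * q ^ 2 + b' * (q ^ 2)⁻¹ := by
    rw [hb'def, hbdef]
    field_simp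
    ring
  have hφrec : ∀ j : ℕ,
      (α + b * (q ^ 2) ^ j + b' * ((q ^ 2)⁻¹) ^ j)
      - β * (α + b * (q ^ 2) ^ (j + 1) + b' * ((q ^ 2)⁻¹) ^ (j + 1))
      + (α + b * (q ^ 2) ^ (j + 2) + b' * ((q ^ 2)⁻¹) ^ (j + 2)) = γ := by
    intro j
    have h1 : q * q⁻¹ = 1 := mul_inv_cancel₀ hq
    have h2 : q ^ 2 * (q ^ 2)⁻¹ = 1 := mul_inv_cancel₀ hq2
    rw [hβ', hγ]
    simp only [pow_succ]
    linear_combination (α * (q^2)⁻¹ * (q * q⁻¹ + 1) - 2 * α) * h1 +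
      (-α * q⁻¹^2 - b * (q^2)^j - b' * ((q^2)⁻¹)^j) * h2
  have key : ∀ i, i ≤ d → θt i = α + b * (q ^ 2) ^ i + b' * ((q ^ 2)⁻¹) ^ i := by
    intro i
    induction i using Nat.strong_induction_on with
    | _ i ih =>
      match i, ih with
      | 0, _ => intro _; simpa using hφ0
      | 1, _ => intro _; simpa using hφ1
      | (j+2), ih =>
        intro hle
        have h1 := ih j (by omega) (by omega)
        have h2 := ih (j+1) (by omega) (by omega)
        have hr := hrec (j+1) (by omega) (by omega)
        simp only [Nat.add_sub_cancel] at hr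
        have hr2 := hφrec j
        linear_combination -hr - hr2 - h1 + β * h2
  -- the product relation from hrec2
  have hid : ∀ u v : F,
      (α+u+v)^2 - (q^2+(q^2)⁻¹)*(α+u+v)*(α+u*q^2+v*(q^2)⁻¹) + (α+u*q^2+v*(q^2)⁻¹)^2
        - (-α*(q-q⁻¹)^2)*((α+u+v)+(α+u*q^2+v*(q^2)⁻¹))
      = α^2*(q-q⁻¹)^2 - u*v*(q^2-(q^2)⁻¹)^2 := by
    intro u v
    field_simp
    ring
  have h5 : ρ = α^2*(q-q⁻¹)^2 - b*b'*(q^2-(q^2)⁻¹)^2 := by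
    rw [hrec2, hφ0, hφ1, hβ', hγ]
    exact hid b b'
  have hρ' : ρ = α^2*(q-q⁻¹)^2 - a*a'*(q^2-(q^2)⁻¹)^2 := by rw [hρ, hz2, hzm2]
  have h6 : (a*a' - b*b') * (q^2 - (q^2)⁻¹)^2 = 0 := by linear_combination hρ' - h5
  have hbb' : b * b' = a * a' := by
    rcases mul_eq_zero.mp h6 with h | h
    · exact (sub_eq_zero.mp h).symm
    · exact absurd h (pow_ne_zero 2 hD)
  -- closed forms for θ
  have hgen : ∀ (x y : F) (i : ℕ),
      α + x * q ^ (2*(i:ℤ) - (d:ℤ)) + y * q ^ ((d:ℤ) - 2*(i:ℤ))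
      = α + (x / q^d) * (q^2)^i + (y * q^d) * ((q^2)⁻¹)^i := by
    intro x y i
    have e0 : q ^ (2*(i:ℤ)) = ((q^2)^i : F) := by
      rw [show (2*(i:ℤ)) = ((2*i : ℕ) : ℤ) by push_cast; ring, zpow_natCast, pow_mul]
    have ed : q ^ ((d:ℤ)) = (q^d : F) := zpow_natCast q d
    rw [zpow_sub₀ hq, zpow_sub₀ hq, e0, ed, inv_pow]
    ring
  have hθform : ∀ i, i ≤ d → θ i = α + (a / q^d) * (q^2)^i + (a' * q^d) * ((q^2)⁻¹)^i :=
    fun i hi => (hθ i hi).trans (hgen a a' i)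
  have hθrev : ∀ i, i ≤ d → θ (d - i) = α + (a' / q^d) * (q^2)^i + (a * q^d) * ((q^2)⁻¹)^i := by
    intro i hi
    have hcast : ((d - i : ℕ) : ℤ) = (d:ℤ) - (i:ℤ) := by omega
    rw [hθ (d-i) (Nat.sub_le d i), hcast,
      show 2*((d:ℤ)-i) - d = (d:ℤ) - 2*i by ring,
      show (d:ℤ) - 2*((d:ℤ)-i) = 2*(i:ℤ) - d by ring]
    linear_combination hgen a' a i
  -- geometric sums
  set S : F := ∑ i ∈ Finset.range (d+1), ((q:F)^2)^i with hSdef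
  set T : F := ∑ i ∈ Finset.range (d+1), (((q:F)^2)⁻¹)^i with hTdef
  have hSne : S ≠ 0 := by
    rw [hSdef, geom_sum_eq hq21]
    apply div_ne_zero
    · rw [← pow_mul]
      exact sub_ne_zero.mpr (hqru (2*(d+1)) (by omega))
    · exact sub_ne_zero.mpr hq21
  have hT : T * (q^2)^d = S := by
    rw [hTdef, hSdef, Finset.sum_mul,
      ← Finset.sum_range_reflect (fun i => ((q:F)^2)^i) (d+1)]
    apply Finset.sum_congr rfl
    intro i hi
    have hi' : i ≤ d := Nat.lt_succ_iff.mp (Finset.mem_range.mp hi)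
    simp only [Nat.add_sub_cancel]
    rw [inv_pow, inv_mul_eq_div, div_eq_iff (pow_ne_zero _ hq2), ← pow_add]
    congr 1
    omega
  have hsum_perm : ∑ i ∈ Finset.range (d+1), θt i = ∑ i ∈ Finset.range (d+1), θ i := by
    rw [← Fin.sum_univ_eq_sum_range (fun i => θt i), ← Fin.sum_univ_eq_sum_range (fun i => θ i)]
    calc ∑ i : Fin (d+1), θt i = ∑ i : Fin (d+1), θ ((σ i : Fin (d+1)) : ℕ) :=
          Finset.sum_congr rfl (fun i _ => hσ i)
      _ = ∑ i : Fin (d+1), θ (i : ℕ) := Equiv.sum_comp σ (fun j : Fin (d+1) => θ (j : ℕ))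
  have hsum_θt : ∑ i ∈ Finset.range (d+1), θt i = (d+1 : ℕ) * α + b * S + b' * T := by
    rw [hSdef, hTdef, Finset.mul_sum, Finset.mul_sum]
    rw [Finset.sum_congr rfl
      (fun i hi => key i (Nat.lt_succ_iff.mp (Finset.mem_range.mp hi)))]
    rw [Finset.sum_add_distrib, Finset.sum_add_distrib, Finset.sum_const,
      Finset.card_range, nsmul_eq_mul]
  have hsum_θ : ∑ i ∈ Finset.range (d+1), θ i
      = (d+1 : ℕ) * α + (a / q^d) * S + (a' * q^d) * T := by
    rw [hSdef, hTdef, Finset.mul_sum, Finset.mul_sum]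
    rw [Finset.sum_congr rfl
      (fun i hi => hθform i (Nat.lt_succ_iff.mp (Finset.mem_range.mp hi)))]
    rw [Finset.sum_add_distrib, Finset.sum_add_distrib, Finset.sum_const,
      Finset.card_range, nsmul_eq_mul]
  have E : (d+1 : ℕ) * α + b * S + b' * T
      = (d+1 : ℕ) * α + (a / q^d) * S + (a' * q^d) * T := by
    rw [← hsum_θt, ← hsum_θ]; exact hsum_perm
  have hA : (a / q^d) * q^d = a := div_mul_cancel₀ a hqd
  have hGS : (b * (q^d)^2 + b' - (a + a') * q^d) * S = 0 := by
    linear_combination ((q^d)^2) * E - (b' - a'*q^d) * hT + (q^d * S) * hA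
  have hsum2 : b * (q^d)^2 + b' = (a + a') * q^d := by
    rcases mul_eq_zero.mp hGS with h | h
    · exact sub_eq_zero.mp h
    · exact absurd h hSne
  have hquad : (b * q^d - a) * (b * q^d - a') = 0 := by
    linear_combination b * hsum2 - hbb'
  rcases mul_eq_zero.mp hquad with h | h
  · have h' : b * q^d = a := sub_eq_zero.mp h
    have hbeq : b = a / q^d := by rw [eq_div_iff hqd]; exact h'
    have hb'eq : b' = a' * q^d := by linear_combination hsum2 - q^d * h'
    left
    intro i hi
    rw [key i hi, hθform i hi, hbeq, hb'eq]
  · have h' : b * q^d = a' := sub_eq_zero.mp h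
    have hbeq : b = a' / q^d := by rw [eq_div_iff hqd]; exact h'
    have hb'eq : b' = a * q^d := by linear_combination hsum2 - q^d * h'
    right
    intro i hi
    rw [key i hi, hθrev i hi, hbeq, hb'eq]
end

section
/- Let q ∈ F be nonzero and let a, a′, b, b′, ξ ∈ F be such that at least two of the three scalars a·a′, b·b′, ξ are nonzero. Then there exists a nonzero c ∈ F such that ξ = −a·a′·c − b·b′·c^{−1}. Moreover, for any nonzero c ∈ F with ξ = −a·a′·c − b·b′·c^{−1} and every integer i with 1 ≤ i ≤ d: (q^i − q^{−i})(q^{i−d−1} − q^{d−i+1})(ξ + ab·q^{2i−d−1} + a′b′·q^{d−2i+1}) = (q^i − q^{−i})(q^{d−i+1} − q^{i−d−1})(b − a′c·q^{d−2i+1})(b′ − ac·q^{2i−d−1})c^{−1}, and (q^i − q^{−i})(q^{i−d−1} − q^{d−i+1})(ξ + a′b·q^{2i−d−1} + ab′·q^{d−2i+1}) = (q^i − q^{−i})(q^{d−i+1} − q^{i−d−1})(b − ac·q^{d−2i+1})(b′ − a′c·q^{2i−d−1})c^{−1}. -/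
/-!
Clearing the denominator, `ξ = -a a' c - b b' c⁻¹` asks for a nonzero root of
`a a' X² + ξ X + b b'`: when both outer coefficients are nonzero the algebraic closure supplies
one and it cannot vanish, otherwise the equation is linear and `ξ ≠ 0` makes its root nonzero.
For the factorizations, put `s = q ^ (2i-d-1)`, so that `q ^ (d-2i+1) = s⁻¹`; expanding
`(b - a' c s⁻¹)(b' - a c s) c⁻¹` and substituting `ξ` leaves `-(ξ + a b s + a' b' s⁻¹)`, and the
sign is absorbed by `q ^ (d-i+1) - q ^ (i-d-1) = -(q ^ (i-d-1) - q ^ (d-i+1))`.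
-/

section

variable {F : Type*} [Field F]

theorem exists_ne_zero_mul_sq_add_mul_add_eq_zero [IsAlgClosed F] {x y : F} (hx : x ≠ 0)
    (hy : y ≠ 0) (ξ : F) : ∃ c : F, c ≠ 0 ∧ x * c ^ 2 + ξ * c + y = 0 := by
  open Polynomial in
  obtain ⟨c, hc⟩ := IsAlgClosed.exists_root (C x * X ^ 2 + C ξ * X + C y)
    (by rw [degree_quadratic hx]; norm_num)
  have hroot : x * c ^ 2 + ξ * c + y = 0 := by simpa using hc
  refine ⟨c, fun h ↦ hy ?_, hroot⟩
  simpa [h] using hroot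

theorem exists_ne_zero_eq_neg_mul_sub_mul_inv [IsAlgClosed F] {x y ξ : F}
    (h : (x ≠ 0 ∧ y ≠ 0) ∨ (x ≠ 0 ∧ ξ ≠ 0) ∨ (y ≠ 0 ∧ ξ ≠ 0)) :
    ∃ c : F, c ≠ 0 ∧ ξ = -(x * c) - y * c⁻¹ := by
  by_cases hx : x = 0
  · obtain ⟨hy, hξ⟩ : y ≠ 0 ∧ ξ ≠ 0 := by tauto
    refine ⟨-y / ξ, div_ne_zero (neg_ne_zero.mpr hy) hξ, ?_⟩
    field_simp
    simp [hx]
  by_cases hy : y = 0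
  · have hξ : ξ ≠ 0 := by tauto
    refine ⟨-ξ / x, div_ne_zero (neg_ne_zero.mpr hξ) hx, ?_⟩
    field_simp
    simp [hy]
  obtain ⟨c, hc, hroot⟩ := exists_ne_zero_mul_sq_add_mul_add_eq_zero hx hy ξ
  refine ⟨c, hc, ?_⟩
  field_simp
  linear_combination hroot

theorem add_mul_add_mul_eq_neg_sub_mul_sub_mul_inv {a a' b b' c ξ s t : F} (hc : c ≠ 0)
    (hst : s * t = 1) (hξ : ξ = -(a * a' * c) - b * b' * c⁻¹) :
    ξ + a * b * s + a' * b' * t = -((b - a' * c * t) * (b' - a * c * s) * c⁻¹) := by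
  subst hξ
  field_simp
  linear_combination a * a' * c ^ 2 * hst

end

theorem stmt7_general {F : Type*} [Field F] [IsAlgClosed F] {d : ℕ}
    (q a a' b b' ξ : F) (hq : q ≠ 0)
    (h2 : (a * a' ≠ 0 ∧ b * b' ≠ 0) ∨ (a * a' ≠ 0 ∧ ξ ≠ 0) ∨ (b * b' ≠ 0 ∧ ξ ≠ 0)) :
    (∃ c : F, c ≠ 0 ∧ ξ = -(a * a' * c) - b * b' * c⁻¹) ∧
    ∀ c : F, c ≠ 0 → ξ = -(a * a' * c) - b * b' * c⁻¹ →
      ∀ i : ℕ, 1 ≤ i → i ≤ d →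
        ((q ^ (i : ℤ) - q ^ (-(i : ℤ))) * (q ^ ((i : ℤ) - (d : ℤ) - 1) - q ^ ((d : ℤ) - (i : ℤ) + 1)) *
            (ξ + a * b * q ^ (2 * (i : ℤ) - (d : ℤ) - 1) + a' * b' * q ^ ((d : ℤ) - 2 * (i : ℤ) + 1)) =
          (q ^ (i : ℤ) - q ^ (-(i : ℤ))) * (q ^ ((d : ℤ) - (i : ℤ) + 1) - q ^ ((i : ℤ) - (d : ℤ) - 1)) *
            (b - a' * c * q ^ ((d : ℤ) - 2 * (i : ℤ) + 1)) * (b' - a * c * q ^ (2 * (i : ℤ) - (d : ℤ) - 1)) * c⁻¹) ∧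
        ((q ^ (i : ℤ) - q ^ (-(i : ℤ))) * (q ^ ((i : ℤ) - (d : ℤ) - 1) - q ^ ((d : ℤ) - (i : ℤ) + 1)) *
            (ξ + a' * b * q ^ (2 * (i : ℤ) - (d : ℤ) - 1) + a * b' * q ^ ((d : ℤ) - 2 * (i : ℤ) + 1)) =
          (q ^ (i : ℤ) - q ^ (-(i : ℤ))) * (q ^ ((d : ℤ) - (i : ℤ) + 1) - q ^ ((i : ℤ) - (d : ℤ) - 1)) *
            (b - a * c * q ^ ((d : ℤ) - 2 * (i : ℤ) + 1)) * (b' - a' * c * q ^ (2 * (i : ℤ) - (d : ℤ) - 1)) * c⁻¹) := by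
  refine ⟨exists_ne_zero_eq_neg_mul_sub_mul_inv h2, fun c hc hξ i _ _ ↦ ?_⟩
  have hst : q ^ (2 * (i : ℤ) - d - 1) * q ^ ((d : ℤ) - 2 * i + 1) = 1 := by
    rw [← zpow_add₀ hq]
    ring_nf
    exact zpow_zero q
  have hξ' : ξ = -(a' * a * c) - b * b' * c⁻¹ := by rw [mul_comm a' a]; exact hξ
  constructor
  · rw [add_mul_add_mul_eq_neg_sub_mul_sub_mul_inv hc hst hξ]
    ring
  · rw [add_mul_add_mul_eq_neg_sub_mul_sub_mul_inv hc hst hξ']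
    ring

/-- Lemma 3.4 of the paper: if at least two of `a a'`, `b b'`, `ξ` are nonzero then
`ξ = -a a' c - b b' c⁻¹` for some nonzero `c`, and for any such `c` the split
sequences factor as stated. -/
theorem stmt7 {F : Type*} [Field F] [IsAlgClosed F] {d : ℕ} (hd : 3 ≤ d)
    (q a a' b b' ξ : F) (hq : q ≠ 0)
    (h2 : (a * a' ≠ 0 ∧ b * b' ≠ 0) ∨ (a * a' ≠ 0 ∧ ξ ≠ 0) ∨ (b * b' ≠ 0 ∧ ξ ≠ 0)) :
    (∃ c : F, c ≠ 0 ∧ ξ = -(a * a' * c) - b * b' * c⁻¹) ∧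
    ∀ c : F, c ≠ 0 → ξ = -(a * a' * c) - b * b' * c⁻¹ →
      ∀ i : ℕ, 1 ≤ i → i ≤ d →
        ((q ^ (i : ℤ) - q ^ (-(i : ℤ))) * (q ^ ((i : ℤ) - (d : ℤ) - 1) - q ^ ((d : ℤ) - (i : ℤ) + 1)) *
            (ξ + a * b * q ^ (2 * (i : ℤ) - (d : ℤ) - 1) + a' * b' * q ^ ((d : ℤ) - 2 * (i : ℤ) + 1)) =
          (q ^ (i : ℤ) - q ^ (-(i : ℤ))) * (q ^ ((d : ℤ) - (i : ℤ) + 1) - q ^ ((i : ℤ) - (d : ℤ) - 1)) *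
            (b - a' * c * q ^ ((d : ℤ) - 2 * (i : ℤ) + 1)) * (b' - a * c * q ^ (2 * (i : ℤ) - (d : ℤ) - 1)) * c⁻¹) ∧
        ((q ^ (i : ℤ) - q ^ (-(i : ℤ))) * (q ^ ((i : ℤ) - (d : ℤ) - 1) - q ^ ((d : ℤ) - (i : ℤ) + 1)) *
            (ξ + a' * b * q ^ (2 * (i : ℤ) - (d : ℤ) - 1) + a * b' * q ^ ((d : ℤ) - 2 * (i : ℤ) + 1)) =
          (q ^ (i : ℤ) - q ^ (-(i : ℤ))) * (q ^ ((d : ℤ) - (i : ℤ) + 1) - q ^ ((i : ℤ) - (d : ℤ) - 1)) *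
            (b - a * c * q ^ ((d : ℤ) - 2 * (i : ℤ) + 1)) * (b' - a' * c * q ^ (2 * (i : ℤ) - (d : ℤ) - 1)) * c⁻¹) :=
  stmt7_general q a a' b b' ξ hq h2
end

section
/- With the hypotheses of the Askey–Wilson setting below, either z_i = z_1·q^{2−2i} for all 1 ≤ i ≤ d, or z_i = z_1·q^{2i−2} for all 1 ≤ i ≤ d. -/
section helpers
variable {F : Type*} [Field F] {n : ℕ}

lemma aw_sum_two (f : Fin n → F) (a b : Fin n) (hab : a ≠ b)
    (h0 : ∀ k, k ≠ a → k ≠ b → f k = 0) : (∑ k, f k) = f a + f b := by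
  have h : ∑ k ∈ ({a, b} : Finset (Fin n)), f k = ∑ k, f k :=
    Finset.sum_subset (Finset.subset_univ _) (by
      intro k _ hk
      simp only [Finset.mem_insert, Finset.mem_singleton, not_or] at hk
      exact h0 k hk.1 hk.2)
  rw [← h, Finset.sum_pair hab]

lemma aw_lmulA (θv : ℕ → F) (A M : Matrix (Fin n) (Fin n) F)
    (hA : ∀ i j : Fin n, A i j = if (i : ℕ) = (j : ℕ) then θv (i : ℕ)
      else if (i : ℕ) = (j : ℕ) + 1 then 1 else 0)
    (i i' j : Fin n) (hi' : (i' : ℕ) + 1 = (i : ℕ)) :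
    (A * M) i j = θv (i : ℕ) * M i j + M i' j := by
  rw [Matrix.mul_apply, aw_sum_two (fun k => A i k * M k j) i i'
    (by intro h; rw [h] at hi'; omega)
    (by
      intro k hk1 hk2
      have h1 : (i : ℕ) ≠ (k : ℕ) := fun h => hk1 (Fin.ext h.symm)
      have h2 : (i : ℕ) ≠ (k : ℕ) + 1 := fun h => hk2 (Fin.ext (by omega))
      simp only [hA, if_neg h1, if_neg h2, zero_mul])]
  have h1 : A i i = θv (i : ℕ) := by rw [hA]; simp
  have h2 : A i i' = 1 := by rw [hA, if_neg (by omega), if_pos (by omega)]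
  rw [h1, h2, one_mul]

lemma aw_rmulA (θv : ℕ → F) (A M : Matrix (Fin n) (Fin n) F)
    (hA : ∀ i j : Fin n, A i j = if (i : ℕ) = (j : ℕ) then θv (i : ℕ)
      else if (i : ℕ) = (j : ℕ) + 1 then 1 else 0)
    (i j j' : Fin n) (hj' : (j : ℕ) + 1 = (j' : ℕ)) :
    (M * A) i j = M i j * θv (j : ℕ) + M i j' := by
  rw [Matrix.mul_apply, aw_sum_two (fun k => M i k * A k j) j j'
    (by intro h; rw [h] at hj'; omega)
    (by
      intro k hk1 hk2
      have h1 : (k : ℕ) ≠ (j : ℕ) := fun h => hk1 (Fin.ext h)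
      have h2 : (k : ℕ) ≠ (j : ℕ) + 1 := fun h => hk2 (Fin.ext (by omega))
      simp only [hA, if_neg h1, if_neg h2, mul_zero])]
  have h1 : A j j = θv (j : ℕ) := by rw [hA]; simp
  have h2 : A j' j = 1 := by rw [hA, if_neg (by omega), if_pos (by omega)]
  rw [h1, h2, mul_one]

lemma aw_lmulAs (xv yv zv : ℕ → F) (As M : Matrix (Fin n) (Fin n) F)
    (hAs : ∀ i j : Fin n, As i j = if (i : ℕ) = (j : ℕ) then xv (i : ℕ)
      else if (i : ℕ) = (j : ℕ) + 1 then zv (i : ℕ)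
      else if (j : ℕ) = (i : ℕ) + 1 then yv (j : ℕ) else 0)
    (i i' j : Fin n) (hi' : (i' : ℕ) + 1 = (i : ℕ))
    (hy : ∀ k : Fin n, (k : ℕ) = (i : ℕ) + 1 → M k j = 0) :
    (As * M) i j = xv (i : ℕ) * M i j + zv (i : ℕ) * M i' j := by
  rw [Matrix.mul_apply, aw_sum_two (fun k => As i k * M k j) i i'
    (by intro h; rw [h] at hi'; omega)
    (by
      intro k hk1 hk2
      by_cases hk3 : (k : ℕ) = (i : ℕ) + 1
      · simp [hy k hk3]
      · have h1 : (i : ℕ) ≠ (k : ℕ) := fun h => hk1 (Fin.ext h.symm)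
        have h2 : (i : ℕ) ≠ (k : ℕ) + 1 := fun h => hk2 (Fin.ext (by omega))
        simp only [hAs, if_neg h1, if_neg h2, if_neg hk3, zero_mul])]
  have h1 : As i i = xv (i : ℕ) := by rw [hAs]; simp
  have h2 : As i i' = zv (i : ℕ) := by
    rw [hAs, if_neg (by omega), if_pos (by omega)]
  rw [h1, h2]

lemma aw_geo {F : Type*} [Field F] (β t : F) (z : ℕ → F) (d : ℕ) (ht : t ≠ 0)
    (hβ : β = t + t⁻¹) (h2 : z 2 = t * z 1)
    (hrec : ∀ j : ℕ, j + 3 ≤ d → z (j + 1) - β * z (j + 2) + z (j + 3) = 0) :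
    ∀ i : ℕ, 1 ≤ i → i ≤ d → z i = z 1 * t ^ (i - 1) := by
  intro i
  induction i using Nat.strong_induction_on with
  | _ i ih =>
    intro h1 hle
    match i, h1 with
    | 1, _ => simp
    | 2, _ => rw [h2]; ring
    | (m + 3), _ =>
      have e := hrec m (by omega)
      have hm1 : z (m + 1) = z 1 * t ^ m := by
        have := ih (m + 1) (by omega) (by omega) (by omega)
        simpa using this
      have hm2 : z (m + 2) = z 1 * t ^ (m + 1) := by
        have := ih (m + 2) (by omega) (by omega) (by omega)
        simpa using this
      have htt : t⁻¹ * t = 1 := inv_mul_cancel₀ ht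
      show z (m + 3) = z 1 * t ^ (m + 2)
      have h3 : z (m + 3) = β * z (m + 2) - z (m + 1) := by linear_combination e
      rw [h3, hm1, hm2, hβ]
      linear_combination (z 1 * t ^ m) * htt

end helpers

/-- stmt8 of the paper, in the Askey–Wilson setting. -/
theorem stmt8 {F : Type*} [Field F] [IsAlgClosed F] {d : ℕ} (hd : 3 ≤ d)
    (q a a' b b' ξ : F) (hq : q ≠ 0)
    (hqru : ∀ n : ℕ, 1 ≤ n → q ^ n ≠ 1)
    (θ : ℤ → F)
    (hθ : ∀ i : ℤ, θ i = a * q ^ (2 * i - (d : ℤ)) + a' * q ^ ((d : ℤ) - 2 * i))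
    (hθdist : ∀ i j : ℕ, i ≤ d → j ≤ d → i ≠ j → θ i ≠ θ j)
    (β ρ ρs ω η ηs : F)
    (hβ : β = q ^ (2 : ℤ) + q ^ (-2 : ℤ))
    (hρ : ρ = -(a * a') * (q ^ (2 : ℤ) - q ^ (-2 : ℤ)) ^ 2)
    (hρs : ρs = -(b * b') * (q ^ (2 : ℤ) - q ^ (-2 : ℤ)) ^ 2)
    (hω : ω = (q - q⁻¹) ^ 2 *
      ((q ^ ((d : ℤ) + 1) + q ^ (-(d : ℤ) - 1)) * ξ - (a + a') * (b + b')))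
    (hη : η = -((q - q⁻¹) * (q ^ (2 : ℤ) - q ^ (-2 : ℤ)) *
      ((a + a') * ξ - a * a' * (b + b') * (q ^ ((d : ℤ) + 1) + q ^ (-(d : ℤ) - 1)))))
    (hηs : ηs = -((q - q⁻¹) * (q ^ (2 : ℤ) - q ^ (-2 : ℤ)) *
      ((b + b') * ξ - b * b' * (a + a') * (q ^ ((d : ℤ) + 1) + q ^ (-(d : ℤ) - 1)))))
    (x y z : ℕ → F)
    (hyz : ∀ i : ℕ, 1 ≤ i → i ≤ d → y i * z i ≠ 0)
    (hy0 : y 0 = 0) (hyd1 : y (d + 1) = 0)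
    (A As : Matrix (Fin (d + 1)) (Fin (d + 1)) F)
    (hA : ∀ i j : Fin (d + 1), A i j =
      if (i : ℕ) = (j : ℕ) then θ (i : ℕ)
      else if (i : ℕ) = (j : ℕ) + 1 then 1 else 0)
    (hAs : ∀ i j : Fin (d + 1), As i j =
      if (i : ℕ) = (j : ℕ) then x (i : ℕ)
      else if (i : ℕ) = (j : ℕ) + 1 then z (i : ℕ)
      else if (j : ℕ) = (i : ℕ) + 1 then y (j : ℕ) else 0)
    (hAW1 : A ^ 2 * As - β • (A * As * A) + As * A ^ 2 - ρ • As =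
      ω • A + η • (1 : Matrix (Fin (d + 1)) (Fin (d + 1)) F))
    (hAW2 : As ^ 2 * A - β • (As * A * As) + A * As ^ 2 - ρs • A =
      ω • As + ηs • (1 : Matrix (Fin (d + 1)) (Fin (d + 1)) F)) :
    (∀ i : ℕ, 1 ≤ i → i ≤ d → z i = z 1 * q ^ ((2 : ℤ) - 2 * (i : ℤ))) ∨
    (∀ i : ℕ, 1 ≤ i → i ≤ d → z i = z 1 * q ^ (2 * (i : ℤ) - 2)) := by
  set θv : ℕ → F := fun m : ℕ => θ (m : ℤ) with hθv
  -- three-term recurrence from AW1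
  have eq1 : ∀ j : ℕ, j + 3 ≤ d → z (j + 1) - β * z (j + 2) + z (j + 3) = 0 := by
    intro j hj
    obtain ⟨i0, hv0⟩ : ∃ k : Fin (d + 1), (k : ℕ) = j := ⟨⟨j, by omega⟩, rfl⟩
    obtain ⟨i1, hv1⟩ : ∃ k : Fin (d + 1), (k : ℕ) = j + 1 := ⟨⟨j + 1, by omega⟩, rfl⟩
    obtain ⟨i2, hv2⟩ : ∃ k : Fin (d + 1), (k : ℕ) = j + 2 := ⟨⟨j + 2, by omega⟩, rfl⟩
    obtain ⟨i3, hv3⟩ : ∃ k : Fin (d + 1), (k : ℕ) = j + 3 := ⟨⟨j + 3, by omega⟩, rfl⟩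
    have a30 : A i3 i0 = 0 := by rw [hA, if_neg (by omega), if_neg (by omega)]
    have a20 : A i2 i0 = 0 := by rw [hA, if_neg (by omega), if_neg (by omega)]
    have a10 : A i1 i0 = 1 := by rw [hA, if_neg (by omega), if_pos (by omega)]
    have s30 : As i3 i0 = 0 := by
      rw [hAs, if_neg (by omega), if_neg (by omega), if_neg (by omega)]
    have s20 : As i2 i0 = 0 := by
      rw [hAs, if_neg (by omega), if_neg (by omega), if_neg (by omega)]
    have s10 : As i1 i0 = z (j + 1) := by
      rw [hAs, if_neg (by omega), if_pos (by omega), hv1]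
    have s31 : As i3 i1 = 0 := by
      rw [hAs, if_neg (by omega), if_neg (by omega), if_neg (by omega)]
    have s21 : As i2 i1 = z (j + 2) := by
      rw [hAs, if_neg (by omega), if_pos (by omega), hv2]
    have s32 : As i3 i2 = z (j + 3) := by
      rw [hAs, if_neg (by omega), if_pos (by omega), hv3]
    have t1 : (A * (A * As)) i3 i0 = z (j + 1) := by
      rw [aw_lmulA θv A (A * As) hA i3 i2 i0 (by omega),
        aw_lmulA θv A As hA i3 i2 i0 (by omega),
        aw_lmulA θv A As hA i2 i1 i0 (by omega), s30, s20, s10]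
      ring
    have t2 : (A * (As * A)) i3 i0 = z (j + 2) := by
      rw [aw_lmulA θv A (As * A) hA i3 i2 i0 (by omega),
        aw_rmulA θv A As hA i3 i0 i1 (by omega),
        aw_rmulA θv A As hA i2 i0 i1 (by omega), s30, s31, s20, s21]
      ring
    have t3 : (As * (A * A)) i3 i0 = z (j + 3) := by
      have hy3 : ∀ k : Fin (d + 1), (k : ℕ) = (i3 : ℕ) + 1 → (A * A) k i0 = 0 := by
        intro k hk
        rw [aw_lmulA θv A A hA k i3 i0 (by omega)]
        have ak : A k i0 = 0 := by rw [hA, if_neg (by omega), if_neg (by omega)]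
        rw [ak, a30]; ring
      rw [aw_lmulAs x y z As (A * A) hAs i3 i2 i0 (by omega) hy3]
      have q30 : (A * A) i3 i0 = 0 := by
        rw [aw_lmulA θv A A hA i3 i2 i0 (by omega), a30, a20]; ring
      have q20 : (A * A) i2 i0 = 1 := by
        rw [aw_lmulA θv A A hA i2 i1 i0 (by omega), a20, a10]; ring
      rw [q30, q20, hv3]; ring
    have hne : i3 ≠ i0 := by intro h; rw [h] at hv3; omega
    have E := congrFun (congrFun hAW1 i3) i0
    rw [pow_two A, mul_assoc A A As, mul_assoc A As A] at E
    simp only [Matrix.sub_apply, Matrix.add_apply, Matrix.smul_apply,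
      smul_eq_mul, Matrix.one_apply_ne hne] at E
    rw [t1, t2, t3, s30, a30] at E
    linear_combination E
  -- quadratic relation from AW2
  have eq2 : z 3 * z 2 - β * (z 3 * z 1) + z 2 * z 1 = 0 := by
    obtain ⟨i0, hv0⟩ : ∃ k : Fin (d + 1), (k : ℕ) = 0 := ⟨⟨0, by omega⟩, rfl⟩
    obtain ⟨i1, hv1⟩ : ∃ k : Fin (d + 1), (k : ℕ) = 1 := ⟨⟨1, by omega⟩, rfl⟩
    obtain ⟨i2, hv2⟩ : ∃ k : Fin (d + 1), (k : ℕ) = 2 := ⟨⟨2, by omega⟩, rfl⟩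
    obtain ⟨i3, hv3⟩ : ∃ k : Fin (d + 1), (k : ℕ) = 3 := ⟨⟨3, by omega⟩, rfl⟩
    have a30 : A i3 i0 = 0 := by rw [hA, if_neg (by omega), if_neg (by omega)]
    have s30 : As i3 i0 = 0 := by
      rw [hAs, if_neg (by omega), if_neg (by omega), if_neg (by omega)]
    have s20 : As i2 i0 = 0 := by
      rw [hAs, if_neg (by omega), if_neg (by omega), if_neg (by omega)]
    have s10 : As i1 i0 = z 1 := by
      rw [hAs, if_neg (by omega), if_pos (by omega), hv1]
    have s31 : As i3 i1 = 0 := by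
      rw [hAs, if_neg (by omega), if_neg (by omega), if_neg (by omega)]
    have s21 : As i2 i1 = z 2 := by
      rw [hAs, if_neg (by omega), if_pos (by omega), hv2]
    have s32 : As i3 i2 = z 3 := by
      rw [hAs, if_neg (by omega), if_pos (by omega), hv3]
    have S1 : (As * (As * A)) i3 i0 = z 3 * z 2 := by
      have hy3 : ∀ k : Fin (d + 1), (k : ℕ) = (i3 : ℕ) + 1 → (As * A) k i0 = 0 := by
        intro k hk
        rw [aw_rmulA θv A As hA k i0 i1 (by omega)]
        have b1 : As k i0 = 0 := by
          rw [hAs, if_neg (by omega), if_neg (by omega), if_neg (by omega)]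
        have b2 : As k i1 = 0 := by
          rw [hAs, if_neg (by omega), if_neg (by omega), if_neg (by omega)]
        rw [b1, b2]; ring
      rw [aw_lmulAs x y z As (As * A) hAs i3 i2 i0 (by omega) hy3,
        aw_rmulA θv A As hA i3 i0 i1 (by omega),
        aw_rmulA θv A As hA i2 i0 i1 (by omega), s30, s31, s20, s21, hv3]
      ring
    have S2 : (As * (A * As)) i3 i0 = z 3 * z 1 := by
      have hy3 : ∀ k : Fin (d + 1), (k : ℕ) = (i3 : ℕ) + 1 → (A * As) k i0 = 0 := by
        intro k hk
        rw [aw_lmulA θv A As hA k i3 i0 (by omega)]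
        have b1 : As k i0 = 0 := by
          rw [hAs, if_neg (by omega), if_neg (by omega), if_neg (by omega)]
        rw [b1, s30]; ring
      rw [aw_lmulAs x y z As (A * As) hAs i3 i2 i0 (by omega) hy3,
        aw_lmulA θv A As hA i3 i2 i0 (by omega),
        aw_lmulA θv A As hA i2 i1 i0 (by omega), s30, s20, s10, hv3]
      ring
    have S3 : (A * (As * As)) i3 i0 = z 2 * z 1 := by
      have r30 : (As * As) i3 i0 = 0 := by
        have hy3 : ∀ k : Fin (d + 1), (k : ℕ) = (i3 : ℕ) + 1 → As k i0 = 0 := by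
          intro k hk
          rw [hAs, if_neg (by omega), if_neg (by omega), if_neg (by omega)]
        rw [aw_lmulAs x y z As As hAs i3 i2 i0 (by omega) hy3, s30, s20]; ring
      have r20 : (As * As) i2 i0 = z 2 * z 1 := by
        have hy2 : ∀ k : Fin (d + 1), (k : ℕ) = (i2 : ℕ) + 1 → As k i0 = 0 := by
          intro k hk
          rw [hAs, if_neg (by omega), if_neg (by omega), if_neg (by omega)]
        rw [aw_lmulAs x y z As As hAs i2 i1 i0 (by omega) hy2, s20, s10, hv2]; ring
      rw [aw_lmulA θv A (As * As) hA i3 i2 i0 (by omega), r30, r20]; ring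
    have hne : i3 ≠ i0 := by intro h; rw [h] at hv3; omega
    have E := congrFun (congrFun hAW2 i3) i0
    rw [pow_two As, mul_assoc As As A, mul_assoc As A As] at E
    simp only [Matrix.sub_apply, Matrix.add_apply, Matrix.smul_apply,
      smul_eq_mul, Matrix.one_apply_ne hne] at E
    rw [S1, S2, S3, a30, s30] at E
    linear_combination E
  -- scalar consequences
  set t : F := q ^ (2 : ℤ) with hT
  have ht : t ≠ 0 := zpow_ne_zero _ hq
  have htq : t = q ^ (2 : ℕ) := by
    rw [hT]; norm_cast
  have hβt : β = t + t⁻¹ := by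
    rw [hβ, hT, ← zpow_neg]
  have hβ0 : β ≠ 0 := by
    intro h
    have h1 : t * t + 1 = 0 := by
      have := h
      rw [hβt] at this
      field_simp at this
      linear_combination this
    have h8 : q ^ (8 : ℕ) = 1 := by
      have : (t * t) * (t * t) = 1 := by
        have h2 : t * t = -1 := by linear_combination h1
        rw [h2]; ring
      calc q ^ (8 : ℕ) = (t * t) * (t * t) := by rw [htq]; ring
        _ = 1 := this
    exact hqru 8 (by norm_num) h8
  -- from eq1 at j = 0 and eq2, derive the factored quadratic
  have e10 := eq1 0 (by omega)
  norm_num at e10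
  have hquad : β * (z 2 ^ 2 - β * (z 2 * z 1) + z 1 ^ 2) = 0 := by
    linear_combination eq2 + (β * z 1 - z 2) * e10
  have hquad2 : z 2 ^ 2 - β * (z 2 * z 1) + z 1 ^ 2 = 0 :=
    (mul_eq_zero.mp hquad).resolve_left hβ0
  have htt : t * t⁻¹ = 1 := mul_inv_cancel₀ ht
  have hfac : (z 2 - t * z 1) * (z 2 - t⁻¹ * z 1) = 0 := by
    rw [hβt] at hquad2
    linear_combination hquad2 + z 1 ^ 2 * htt
  rcases mul_eq_zero.mp hfac with hcase | hcase
  · -- z 2 = t * z 1 : geometric with ratio q^2, right disjunct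
    right
    have hgeo := aw_geo β t z d ht hβt (by linear_combination hcase) eq1
    intro i h1 hle
    have hexp : (2 * (i : ℤ) - 2) = ((2 * (i - 1) : ℕ) : ℤ) := by omega
    rw [hexp, zpow_natCast, pow_mul, ← htq]
    exact hgeo i h1 hle
  · -- z 2 = t⁻¹ * z 1 : geometric with ratio q^{-2}, left disjunct
    left
    have hβt' : β = t⁻¹ + (t⁻¹)⁻¹ := by rw [inv_inv, hβt]; ring
    have hgeo := aw_geo β t⁻¹ z d (inv_ne_zero ht) hβt' (by linear_combination hcase) eq1
    intro i h1 hle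
    have hexp : ((2 : ℤ) - 2 * (i : ℤ)) = -((2 * (i - 1) : ℕ) : ℤ) := by omega
    rw [hexp, zpow_neg, zpow_natCast, pow_mul, ← htq, ← inv_pow]
    exact hgeo i h1 hle
end

section
/- With the hypotheses of the Askey–Wilson setting below, assume moreover that z_i = z_1·q^{2−2i} for 1 ≤ i ≤ d. Then q^{−3}·x_{i−1} − (q + q^{−1})·x_i + q³·x_{i+1} = 0 for 1 ≤ i ≤ d−1. -/
/-- stmt9 of the paper, in the Askey–Wilson setting. -/
theorem stmt9 {F : Type*} [Field F] [IsAlgClosed F] {d : ℕ} (hd : 3 ≤ d)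
    (q a a' b b' ξ : F) (hq : q ≠ 0)
    (hqru : ∀ n : ℕ, 1 ≤ n → q ^ n ≠ 1)
    (θ : ℤ → F)
    (hθ : ∀ i : ℤ, θ i = a * q ^ (2 * i - (d : ℤ)) + a' * q ^ ((d : ℤ) - 2 * i))
    (hθdist : ∀ i j : ℕ, i ≤ d → j ≤ d → i ≠ j → θ i ≠ θ j)
    (β ρ ρs ω η ηs : F)
    (hβ : β = q ^ (2 : ℤ) + q ^ (-2 : ℤ))
    (hρ : ρ = -(a * a') * (q ^ (2 : ℤ) - q ^ (-2 : ℤ)) ^ 2)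
    (hρs : ρs = -(b * b') * (q ^ (2 : ℤ) - q ^ (-2 : ℤ)) ^ 2)
    (hω : ω = (q - q⁻¹) ^ 2 *
      ((q ^ ((d : ℤ) + 1) + q ^ (-(d : ℤ) - 1)) * ξ - (a + a') * (b + b')))
    (hη : η = -((q - q⁻¹) * (q ^ (2 : ℤ) - q ^ (-2 : ℤ)) *
      ((a + a') * ξ - a * a' * (b + b') * (q ^ ((d : ℤ) + 1) + q ^ (-(d : ℤ) - 1)))))
    (hηs : ηs = -((q - q⁻¹) * (q ^ (2 : ℤ) - q ^ (-2 : ℤ)) *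
      ((b + b') * ξ - b * b' * (a + a') * (q ^ ((d : ℤ) + 1) + q ^ (-(d : ℤ) - 1)))))
    (x y z : ℕ → F)
    (hyz : ∀ i : ℕ, 1 ≤ i → i ≤ d → y i * z i ≠ 0)
    (hy0 : y 0 = 0) (hyd1 : y (d + 1) = 0)
    (A As : Matrix (Fin (d + 1)) (Fin (d + 1)) F)
    (hA : ∀ i j : Fin (d + 1), A i j =
      if (i : ℕ) = (j : ℕ) then θ (i : ℕ)
      else if (i : ℕ) = (j : ℕ) + 1 then 1 else 0)
    (hAs : ∀ i j : Fin (d + 1), As i j =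
      if (i : ℕ) = (j : ℕ) then x (i : ℕ)
      else if (i : ℕ) = (j : ℕ) + 1 then z (i : ℕ)
      else if (j : ℕ) = (i : ℕ) + 1 then y (j : ℕ) else 0)
    (hAW1 : A ^ 2 * As - β • (A * As * A) + As * A ^ 2 - ρ • As =
      ω • A + η • (1 : Matrix (Fin (d + 1)) (Fin (d + 1)) F))
    (hAW2 : As ^ 2 * A - β • (As * A * As) + A * As ^ 2 - ρs • A =
      ω • As + ηs • (1 : Matrix (Fin (d + 1)) (Fin (d + 1)) F))
    (hz : ∀ i : ℕ, 1 ≤ i → i ≤ d → z i = z 1 * q ^ ((2 : ℤ) - 2 * (i : ℤ))) :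
    ∀ i : ℕ, 1 ≤ i → i ≤ d - 1 →
      q ^ (-3 : ℤ) * x (i - 1) - (q + q⁻¹) * x i + q ^ (3 : ℤ) * x (i + 1) = 0 := by
  intro i hi1 hi2
  have hid : i + 1 ≤ d := by omega
  have hp : i + 1 < d + 1 := by omega
  have hf : i < d + 1 := by omega
  have hr : i - 1 < d + 1 := by omega
  set P : Fin (d + 1) := ⟨i + 1, hp⟩ with hPdef
  set F1 : Fin (d + 1) := ⟨i, hf⟩ with hF1def
  set R : Fin (d + 1) := ⟨i - 1, hr⟩ with hRdef
  have vP : (P : ℕ) = i + 1 := rfl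
  have vF : (F1 : ℕ) = i := rfl
  have vR : (R : ℕ) = i - 1 := rfl
  -- base entries
  have aPR : A P R = 0 := by
    rw [hA, if_neg (by omega), if_neg (by omega)]
  have aPF1 : A P F1 = 1 := by
    rw [hA, if_neg (by omega), if_pos (by omega)]
  have aPP : A P P = θ (i + 1 : ℕ) := by
    rw [hA, if_pos rfl, vP]
  have aF1R : A F1 R = 1 := by
    rw [hA, if_neg (by omega), if_pos (by omega)]
  have aF1F1 : A F1 F1 = θ (i : ℕ) := by
    rw [hA, if_pos rfl, vF]
  have aRR : A R R = θ (i - 1 : ℕ) := by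
    rw [hA, if_pos rfl, vR]
  have asPR : As P R = 0 := by
    rw [hAs, if_neg (by omega), if_neg (by omega), if_neg (by omega)]
  have asPF1 : As P F1 = z (i + 1) := by
    rw [hAs, if_neg (by omega), if_pos (by omega), vP]
  have asPP : As P P = x (i + 1) := by
    rw [hAs, if_pos rfl, vP]
  have asF1R : As F1 R = z i := by
    rw [hAs, if_neg (by omega), if_pos (by omega), vF]
  have asF1F1 : As F1 F1 = x i := by
    rw [hAs, if_pos rfl, vF]
  have asRR : As R R = x (i - 1) := by
    rw [hAs, if_pos rfl, vR]
  have onePR : (1 : Matrix (Fin (d + 1)) (Fin (d + 1)) F) P R = 0 := by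
    apply Matrix.one_apply_ne
    intro h
    rw [Fin.ext_iff] at h
    omega
  have hRF : R ≠ F1 := by intro h; rw [Fin.ext_iff] at h; omega
  have hFP : F1 ≠ P := by intro h; rw [Fin.ext_iff] at h; omega
  -- product entries
  have h1 : (As * As) P R = z (i + 1) * z i := by
    rw [Matrix.mul_apply, Fintype.sum_eq_single F1]
    · rw [asPF1, asF1R]
    · intro k hk
      have nk : (k : ℕ) ≠ i := by
        intro h; exact hk (Fin.ext (by omega))
      by_cases hc : (R : ℕ) = (k : ℕ) + 1 ∨ (k : ℕ) = (R : ℕ)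
      · rw [hAs P k, if_neg (by omega), if_neg (by omega), if_neg (by omega), zero_mul]
      · push_neg at hc
        rw [hAs k R, if_neg (by omega), if_neg (by omega), if_neg (by omega), mul_zero]
  have h2 : (As * As) P F1 = z (i + 1) * x i + x (i + 1) * z (i + 1) := by
    rw [Matrix.mul_apply,
      Finset.sum_eq_add_of_mem F1 P (Finset.mem_univ _) (Finset.mem_univ _) hFP]
    · rw [asPF1, asF1F1, asPP]
    · intro k _ hk
      obtain ⟨nk1, nk2⟩ := hk
      have nk1' : (k : ℕ) ≠ i := by intro h; exact nk1 (Fin.ext (by omega))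
      have nk2' : (k : ℕ) ≠ i + 1 := by intro h; exact nk2 (Fin.ext (by omega))
      by_cases hc : (F1 : ℕ) = (k : ℕ) + 1
      · rw [hAs P k, if_neg (by omega), if_neg (by omega), if_neg (by omega), zero_mul]
      · rw [hAs k F1, if_neg (by omega), if_neg (by omega), if_neg (by omega), mul_zero]
  have h3 : (As * As) F1 R = z i * x (i - 1) + x i * z i := by
    rw [Matrix.mul_apply,
      Finset.sum_eq_add_of_mem R F1 (Finset.mem_univ _) (Finset.mem_univ _) hRF]
    · rw [asF1R, asRR, asF1F1]
    · intro k _ hk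
      obtain ⟨nk1, nk2⟩ := hk
      have nk1' : (k : ℕ) ≠ i - 1 := by intro h; exact nk1 (Fin.ext (by omega))
      have nk2' : (k : ℕ) ≠ i := by intro h; exact nk2 (Fin.ext (by omega))
      by_cases hc : (R : ℕ) = (k : ℕ) + 1
      · rw [hAs F1 k, if_neg (by omega), if_neg (by omega), if_neg (by omega), zero_mul]
      · rw [hAs k R, if_neg (by omega), if_neg (by omega), if_neg (by omega), mul_zero]
  have h4 : (As * A) P R = z (i + 1) := by
    rw [Matrix.mul_apply, Fintype.sum_eq_single F1]
    · rw [asPF1, aF1R, mul_one]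
    · intro k hk
      have nk : (k : ℕ) ≠ i := by intro h; exact hk (Fin.ext (by omega))
      by_cases hc : (k : ℕ) = (R : ℕ)
      · rw [hAs P k, if_neg (by omega), if_neg (by omega), if_neg (by omega), zero_mul]
      · rw [hA k R, if_neg (by omega), if_neg (by omega), mul_zero]
  have h5 : (As * A) P F1 = z (i + 1) * θ (i : ℕ) + x (i + 1) := by
    rw [Matrix.mul_apply,
      Finset.sum_eq_add_of_mem F1 P (Finset.mem_univ _) (Finset.mem_univ _) hFP]
    · rw [asPF1, aF1F1, asPP, aPF1, mul_one]
    · intro k _ hk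
      obtain ⟨nk1, nk2⟩ := hk
      have nk1' : (k : ℕ) ≠ i := by intro h; exact nk1 (Fin.ext (by omega))
      have nk2' : (k : ℕ) ≠ i + 1 := by intro h; exact nk2 (Fin.ext (by omega))
      rw [hA k F1, if_neg (by omega), if_neg (by omega), mul_zero]
  have h6 : (As * As * A) P R = (z (i + 1) * z i) * θ (i - 1 : ℕ)
      + (z (i + 1) * x i + x (i + 1) * z (i + 1)) := by
    rw [Matrix.mul_apply,
      Finset.sum_eq_add_of_mem R F1 (Finset.mem_univ _) (Finset.mem_univ _) hRF]
    · rw [h1, h2, aRR, aF1R, mul_one]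
    · intro k _ hk
      obtain ⟨nk1, nk2⟩ := hk
      have nk1' : (k : ℕ) ≠ i - 1 := by intro h; exact nk1 (Fin.ext (by omega))
      have nk2' : (k : ℕ) ≠ i := by intro h; exact nk2 (Fin.ext (by omega))
      rw [hA k R, if_neg (by omega), if_neg (by omega), mul_zero]
  have h7 : (As * A * As) P R = z (i + 1) * x (i - 1)
      + (z (i + 1) * θ (i : ℕ) + x (i + 1)) * z i := by
    rw [Matrix.mul_apply,
      Finset.sum_eq_add_of_mem R F1 (Finset.mem_univ _) (Finset.mem_univ _) hRF]
    · rw [h4, h5, asRR, asF1R]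
    · intro k _ hk
      obtain ⟨nk1, nk2⟩ := hk
      have nk1' : (k : ℕ) ≠ i - 1 := by intro h; exact nk1 (Fin.ext (by omega))
      have nk2' : (k : ℕ) ≠ i := by intro h; exact nk2 (Fin.ext (by omega))
      by_cases hc : (R : ℕ) = (k : ℕ) + 1
      · have hz0 : (As * A) P k = 0 := by
          rw [Matrix.mul_apply]
          apply Finset.sum_eq_zero
          intro l _
          by_cases hl : (l : ℕ) = (k : ℕ) ∨ (l : ℕ) = (k : ℕ) + 1
          · rw [hAs P l, if_neg (by omega), if_neg (by omega), if_neg (by omega), zero_mul]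
          · push_neg at hl
            rw [hA l k, if_neg (by omega), if_neg (by omega), mul_zero]
        rw [hz0, zero_mul]
      · rw [hAs k R, if_neg (by omega), if_neg (by omega), if_neg (by omega), mul_zero]
  have h8 : (A * (As * As)) P R = θ (i + 1 : ℕ) * (z (i + 1) * z i)
      + (z i * x (i - 1) + x i * z i) := by
    rw [Matrix.mul_apply,
      Finset.sum_eq_add_of_mem P F1 (Finset.mem_univ _) (Finset.mem_univ _) (Ne.symm hFP)]
    · rw [aPP, h1, aPF1, h3, one_mul]
    · intro k _ hk
      obtain ⟨nk1, nk2⟩ := hk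
      have nk1' : (k : ℕ) ≠ i + 1 := by intro h; exact nk1 (Fin.ext (by omega))
      have nk2' : (k : ℕ) ≠ i := by intro h; exact nk2 (Fin.ext (by omega))
      rw [hA P k, if_neg (by omega), if_neg (by omega), zero_mul]
  -- the scalar equation from entry (P, R) of hAW2
  simp only [pow_two] at hAW2
  have E0 : (As * As * A) P R - β * (As * A * As) P R + (A * (As * As)) P R
      - ρs * A P R = ω * As P R + ηs * (1 : Matrix (Fin (d + 1)) (Fin (d + 1)) F) P R := by
    have := congrFun (congrFun hAW2 P) R
    simpa [Matrix.sub_apply, Matrix.add_apply, Matrix.smul_apply, smul_eq_mul] using this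
  rw [h6, h7, h8, aPR, asPR, onePR, mul_zero, mul_zero, mul_zero, sub_zero, add_zero] at E0
  -- θ three-term recurrence
  have c1 : ((i - 1 : ℕ) : ℤ) = (i : ℤ) - 1 := by omega
  have c2 : ((i + 1 : ℕ) : ℤ) = (i : ℤ) + 1 := by omega
  have hrec : θ (i - 1 : ℕ) + θ (i + 1 : ℕ) = β * θ (i : ℕ) := by
    rw [hθ, hθ, hθ, hβ, c1, c2]
    have e1 : 2 * ((i : ℤ) - 1) - (d : ℤ) = (2 * (i : ℤ) - (d : ℤ)) + (-2) := by ring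
    have e2 : (d : ℤ) - 2 * ((i : ℤ) - 1) = ((d : ℤ) - 2 * (i : ℤ)) + 2 := by ring
    have e3 : 2 * ((i : ℤ) + 1) - (d : ℤ) = (2 * (i : ℤ) - (d : ℤ)) + 2 := by ring
    have e4 : (d : ℤ) - 2 * ((i : ℤ) + 1) = ((d : ℤ) - 2 * (i : ℤ)) + (-2) := by ring
    rw [e1, e2, e3, e4, zpow_add₀ hq, zpow_add₀ hq, zpow_add₀ hq, zpow_add₀ hq]
    ring
  -- z relation
  have hzz : z i = q ^ (2 : ℤ) * z (i + 1) := by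
    rw [hz i hi1 (by omega), hz (i + 1) (by omega) (by omega), c2]
    have e : (2 : ℤ) - 2 * (i : ℤ) = 2 + (2 - 2 * ((i : ℤ) + 1)) := by ring
    rw [e, zpow_add₀ hq]
    ring
  have hzne : z (i + 1) ≠ 0 := by
    intro h0
    exact hyz (i + 1) (by omega) (by omega) (by rw [h0, mul_zero])
  -- convert zpow literals to pow
  have p2 : q ^ (2 : ℤ) = q ^ 2 := by
    norm_cast
  have pm2 : q ^ (-2 : ℤ) = (q ^ 2)⁻¹ := by
    rw [← p2, ← zpow_neg]
  have p3 : q ^ (3 : ℤ) = q ^ 3 := by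
    norm_cast
  have pm3 : q ^ (-3 : ℤ) = (q ^ 3)⁻¹ := by
    rw [← p3, ← zpow_neg]
  rw [hzz, hβ, p2, pm2] at E0
  rw [hβ, p2, pm2] at hrec
  rw [pm3, p3]
  have hq2 : (q : F) ^ 2 ≠ 0 := pow_ne_zero 2 hq
  have hq3 : (q : F) ^ 3 ≠ 0 := pow_ne_zero 3 hq
  have hq2c : (q ^ 2)⁻¹ * q ^ 2 = 1 := inv_mul_cancel₀ hq2
  have hq3c : (q ^ 3)⁻¹ * q ^ 3 = 1 := inv_mul_cancel₀ hq3
  have hq1c : q⁻¹ * q = 1 := inv_mul_cancel₀ hq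
  have main : z (i + 1) * x (i - 1) - (q ^ 4 + q ^ 2) * (z (i + 1) * x i)
      + q ^ 6 * (z (i + 1) * x (i + 1)) = 0 := by
    linear_combination (-(q : F) ^ 2) * E0 + q ^ 4 * (z (i + 1)) ^ 2 * hrec
      - (z (i + 1) * x (i - 1) + q ^ 2 * (z (i + 1) * x (i + 1))) * hq2c
  have main' : x (i - 1) - (q ^ 4 + q ^ 2) * x i + q ^ 6 * x (i + 1) = 0 := by
    have h0 : z (i + 1) * (x (i - 1) - (q ^ 4 + q ^ 2) * x i + q ^ 6 * x (i + 1)) = 0 := by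
      linear_combination main
    exact (mul_eq_zero.mp h0).resolve_left hzne
  linear_combination ((q ^ 3)⁻¹) * main' + ((q + q⁻¹) * x i - q ^ 3 * x (i + 1)) * hq3c
    - ((q ^ 3)⁻¹ * q ^ 2 * x i) * hq1c
end

section
/- With the hypotheses of the Askey–Wilson setting below, assume moreover that z_i = z_1·q^{2−2i} for 1 ≤ i ≤ d. Then x_{i−1} − β·x_i + x_{i+1} = a′·q^{d−2i−1}(q² − q^{−2})(q³ − q^{−3})·z_i for 1 ≤ i ≤ d−1. -/
/-!
Since `A` is lower bidiagonal and `A*` tridiagonal, the `(i + 1, i - 1)` entry of the first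
Askey–Wilson relation involves only `x_{i-1}, x_i, x_{i+1}`, `z_i, z_{i+1}` and
`θ_{i-1}, θ_i, θ_{i+1}`, while the right-hand side `ωA + ηI` vanishes there. Substituting
`θ_k = a q^{2k-d} + a' q^{d-2k}` and `z_{i+1} = q^{-2} z_i`, the terms in `a` cancel and the
terms in `a'` give the claimed second difference of the `x_k`.
-/

namespace Matrix

variable {R : Type*} {n : ℕ}

theorem lowerBidiagonal_mul_apply_succ [NonAssocSemiring R] {θ : ℕ → R}
    {A : Matrix (Fin (n + 1)) (Fin (n + 1)) R}
    (hA : ∀ i j : Fin (n + 1), A i j =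
      if (i : ℕ) = (j : ℕ) then θ i else if (i : ℕ) = (j : ℕ) + 1 then 1 else 0)
    (M : Matrix (Fin (n + 1)) (Fin (n + 1)) R) {m : ℕ} (hm : m + 1 ≤ n) (c : Fin (n + 1)) :
    (A * M) ⟨m + 1, by omega⟩ c = θ (m + 1) * M ⟨m + 1, by omega⟩ c + M ⟨m, by omega⟩ c := by
  rw [mul_apply, Fintype.sum_eq_add ⟨m + 1, by omega⟩ ⟨m, by omega⟩ (by simp [Fin.ext_iff])]
  · simp [hA]
  · rintro k ⟨hk₁, hk₂⟩
    have h₁ : m + 1 ≠ k := fun h => hk₁ (Fin.ext h.symm)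
    have h₂ : m ≠ k := fun h => hk₂ (Fin.ext h.symm)
    simp [hA, h₁, h₂]

theorem mul_lowerBidiagonal_apply [NonAssocSemiring R] {θ : ℕ → R}
    {A : Matrix (Fin (n + 1)) (Fin (n + 1)) R}
    (hA : ∀ i j : Fin (n + 1), A i j =
      if (i : ℕ) = (j : ℕ) then θ i else if (i : ℕ) = (j : ℕ) + 1 then 1 else 0)
    (M : Matrix (Fin (n + 1)) (Fin (n + 1)) R) (r : Fin (n + 1)) {c : ℕ} (hc : c + 1 ≤ n) :
    (M * A) r ⟨c, by omega⟩ = M r ⟨c, by omega⟩ * θ c + M r ⟨c + 1, by omega⟩ := by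
  rw [mul_apply, Fintype.sum_eq_add ⟨c, by omega⟩ ⟨c + 1, by omega⟩ (by simp [Fin.ext_iff])]
  · simp [hA]
  · rintro k ⟨hk₁, hk₂⟩
    have h₁ : (k : ℕ) ≠ c := fun h => hk₁ (Fin.ext h)
    have h₂ : (k : ℕ) ≠ c + 1 := fun h => hk₂ (Fin.ext h)
    simp [hA, h₁, h₂]

def askeyWilsonForm {ι : Type*} [Fintype ι] [DecidableEq ι] [CommRing R] (β ρ : R)
    (A B : Matrix ι ι R) : Matrix ι ι R :=
  A ^ 2 * B - β • (A * B * A) + B * A ^ 2 - ρ • B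

theorem askeyWilsonForm_apply_add_two [CommRing R] {θ x y z : ℕ → R}
    {A B : Matrix (Fin (n + 1)) (Fin (n + 1)) R}
    (hA : ∀ i j : Fin (n + 1), A i j =
      if (i : ℕ) = (j : ℕ) then θ i else if (i : ℕ) = (j : ℕ) + 1 then 1 else 0)
    (hB : ∀ i j : Fin (n + 1), B i j =
      if (i : ℕ) = (j : ℕ) then x i
      else if (i : ℕ) = (j : ℕ) + 1 then z i
      else if (j : ℕ) = (i : ℕ) + 1 then y j else 0)
    (β ρ : R) {m : ℕ} (hm : m + 2 ≤ n) :
    askeyWilsonForm β ρ A B ⟨m + 2, by omega⟩ ⟨m, by omega⟩ =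
      x m - β * x (m + 1) + x (m + 2)
        + ((θ (m + 2) + θ (m + 1)) * z (m + 1)
          - β * (z (m + 1) * θ m + θ (m + 2) * z (m + 2))
          + z (m + 2) * (θ m + θ (m + 1))) := by
  rw [askeyWilsonForm, sq, mul_assoc A A B, ← mul_assoc B A A]
  simp only [sub_apply, add_apply, smul_apply, smul_eq_mul]
  simp (disch := omega) only [lowerBidiagonal_mul_apply_succ hA, mul_lowerBidiagonal_apply hA]
  simp +arith only [hB, Nat.add_eq_left, OfNat.ofNat_ne_zero, ↓reduceIte, Nat.add_left_cancel_iff,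
    OfNat.ofNat_ne_one, mul_zero, one_ne_zero, zero_add, zero_mul, sub_zero]
  ring

end Matrix

theorem askeyWilson_theta_identity {K : Type*} [Field K] {q a a' : K} {d : ℤ} (hq : q ≠ 0)
    {θ : ℤ → K} (hθ : ∀ i : ℤ, θ i = a * q ^ (2 * i - d) + a' * q ^ (d - 2 * i)) (m : ℤ) (z : K) :
    (θ (m + 2) + θ (m + 1)) * z
      - (q ^ (2 : ℤ) + q ^ (-2 : ℤ)) * (z * θ m + θ (m + 2) * (z * q ^ (-2 : ℤ)))
      + z * q ^ (-2 : ℤ) * (θ m + θ (m + 1)) =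
    -(a' * q ^ (d - 2 * (m + 1) - 1) * (q ^ (2 : ℤ) - q ^ (-2 : ℤ)) *
      (q ^ (3 : ℤ) - q ^ (-3 : ℤ)) * z) := by
  simp only [hθ, zpow_sub₀ hq, zpow_add₀ hq, mul_add, zpow_mul, zpow_neg]
  field_simp
  ring

theorem stmt10_general {F : Type*} [Field F] {d : ℕ}
    (q a a' : F) (hq : q ≠ 0)
    (θ : ℤ → F)
    (hθ : ∀ i : ℤ, θ i = a * q ^ (2 * i - (d : ℤ)) + a' * q ^ ((d : ℤ) - 2 * i))
    (β ρ ω η : F)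
    (hβ : β = q ^ (2 : ℤ) + q ^ (-2 : ℤ))
    (x y z : ℕ → F)
    (A As : Matrix (Fin (d + 1)) (Fin (d + 1)) F)
    (hA : ∀ i j : Fin (d + 1), A i j =
      if (i : ℕ) = (j : ℕ) then θ (i : ℕ)
      else if (i : ℕ) = (j : ℕ) + 1 then 1 else 0)
    (hAs : ∀ i j : Fin (d + 1), As i j =
      if (i : ℕ) = (j : ℕ) then x (i : ℕ)
      else if (i : ℕ) = (j : ℕ) + 1 then z (i : ℕ)
      else if (j : ℕ) = (i : ℕ) + 1 then y (j : ℕ) else 0)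
    (hAW1 : A ^ 2 * As - β • (A * As * A) + As * A ^ 2 - ρ • As =
      ω • A + η • (1 : Matrix (Fin (d + 1)) (Fin (d + 1)) F))
    (hz : ∀ i : ℕ, 1 ≤ i → i ≤ d → z i = z 1 * q ^ ((2 : ℤ) - 2 * (i : ℤ))) :
    ∀ i : ℕ, 1 ≤ i → i ≤ d - 1 →
      x (i - 1) - β * x i + x (i + 1) =
        a' * q ^ ((d : ℤ) - 2 * (i : ℤ) - 1) * (q ^ (2 : ℤ) - q ^ (-2 : ℤ)) *
          (q ^ (3 : ℤ) - q ^ (-3 : ℤ)) * z i := by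
  intro i hi₁ hi₂
  obtain ⟨m, rfl⟩ : ∃ m, i = m + 1 := ⟨i - 1, by omega⟩
  have hm : m + 2 ≤ d := by omega
  have hentry : Matrix.askeyWilsonForm β ρ A As ⟨m + 2, by omega⟩ ⟨m, by omega⟩ = 0 := by
    rw [Matrix.askeyWilsonForm, hAW1]
    simp [hA]
  rw [Matrix.askeyWilsonForm_apply_add_two (θ := fun k => θ k) hA hAs β ρ hm] at hentry
  have hz₂ : z (m + 2) = z (m + 1) * q ^ (-2 : ℤ) := by
    rw [hz (m + 1) (by omega) (by omega), hz (m + 2) (by omega) (by omega), mul_assoc,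
      ← zpow_add₀ hq]
    push_cast
    ring_nf
  have hθ_identity := askeyWilson_theta_identity hq hθ m (z (m + 1))
  subst hβ
  rw [Nat.add_sub_cancel]
  rw [hz₂] at hentry
  push_cast at hentry ⊢
  linear_combination hentry - hθ_identity

/-- stmt10 of the paper, in the Askey–Wilson setting. -/
theorem stmt10 {F : Type*} [Field F] [IsAlgClosed F] {d : ℕ} (hd : 3 ≤ d)
    (q a a' b b' ξ : F) (hq : q ≠ 0)
    (hqru : ∀ n : ℕ, 1 ≤ n → q ^ n ≠ 1)
    (θ : ℤ → F)
    (hθ : ∀ i : ℤ, θ i = a * q ^ (2 * i - (d : ℤ)) + a' * q ^ ((d : ℤ) - 2 * i))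
    (hθdist : ∀ i j : ℕ, i ≤ d → j ≤ d → i ≠ j → θ i ≠ θ j)
    (β ρ ρs ω η ηs : F)
    (hβ : β = q ^ (2 : ℤ) + q ^ (-2 : ℤ))
    (hρ : ρ = -(a * a') * (q ^ (2 : ℤ) - q ^ (-2 : ℤ)) ^ 2)
    (hρs : ρs = -(b * b') * (q ^ (2 : ℤ) - q ^ (-2 : ℤ)) ^ 2)
    (hω : ω = (q - q⁻¹) ^ 2 *
      ((q ^ ((d : ℤ) + 1) + q ^ (-(d : ℤ) - 1)) * ξ - (a + a') * (b + b')))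
    (hη : η = -((q - q⁻¹) * (q ^ (2 : ℤ) - q ^ (-2 : ℤ)) *
      ((a + a') * ξ - a * a' * (b + b') * (q ^ ((d : ℤ) + 1) + q ^ (-(d : ℤ) - 1)))))
    (hηs : ηs = -((q - q⁻¹) * (q ^ (2 : ℤ) - q ^ (-2 : ℤ)) *
      ((b + b') * ξ - b * b' * (a + a') * (q ^ ((d : ℤ) + 1) + q ^ (-(d : ℤ) - 1)))))
    (x y z : ℕ → F)
    (hyz : ∀ i : ℕ, 1 ≤ i → i ≤ d → y i * z i ≠ 0)
    (hy0 : y 0 = 0) (hyd1 : y (d + 1) = 0)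
    (A As : Matrix (Fin (d + 1)) (Fin (d + 1)) F)
    (hA : ∀ i j : Fin (d + 1), A i j =
      if (i : ℕ) = (j : ℕ) then θ (i : ℕ)
      else if (i : ℕ) = (j : ℕ) + 1 then 1 else 0)
    (hAs : ∀ i j : Fin (d + 1), As i j =
      if (i : ℕ) = (j : ℕ) then x (i : ℕ)
      else if (i : ℕ) = (j : ℕ) + 1 then z (i : ℕ)
      else if (j : ℕ) = (i : ℕ) + 1 then y (j : ℕ) else 0)
    (hAW1 : A ^ 2 * As - β • (A * As * A) + As * A ^ 2 - ρ • As =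
      ω • A + η • (1 : Matrix (Fin (d + 1)) (Fin (d + 1)) F))
    (hAW2 : As ^ 2 * A - β • (As * A * As) + A * As ^ 2 - ρs • A =
      ω • As + ηs • (1 : Matrix (Fin (d + 1)) (Fin (d + 1)) F))
    (hz : ∀ i : ℕ, 1 ≤ i → i ≤ d → z i = z 1 * q ^ ((2 : ℤ) - 2 * (i : ℤ))) :
    ∀ i : ℕ, 1 ≤ i → i ≤ d - 1 →
      x (i - 1) - β * x i + x (i + 1) =
        a' * q ^ ((d : ℤ) - 2 * (i : ℤ) - 1) * (q ^ (2 : ℤ) - q ^ (-2 : ℤ)) *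
          (q ^ (3 : ℤ) - q ^ (-3 : ℤ)) * z i :=
  stmt10_general q a a' hq θ hθ β ρ ω η hβ x y z A As hA hAs hAW1 hz
end

section
/- With the hypotheses of the Askey–Wilson setting below, y_{i−1} − β·y_i + y_{i+1} = (θ_{i−2} − θ_{i−1})·x_{i−1} + (θ_{i+1} − θ_i)·x_i + ω for 1 ≤ i ≤ d. -/
/-- stmt11 of the paper, in the Askey–Wilson setting. -/
theorem stmt11 {F : Type*} [Field F] [IsAlgClosed F] {d : ℕ} (hd : 3 ≤ d)
    (q a a' b b' ξ : F) (hq : q ≠ 0)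
    (hqru : ∀ n : ℕ, 1 ≤ n → q ^ n ≠ 1)
    (θ : ℤ → F)
    (hθ : ∀ i : ℤ, θ i = a * q ^ (2 * i - (d : ℤ)) + a' * q ^ ((d : ℤ) - 2 * i))
    (hθdist : ∀ i j : ℕ, i ≤ d → j ≤ d → i ≠ j → θ i ≠ θ j)
    (β ρ ρs ω η ηs : F)
    (hβ : β = q ^ (2 : ℤ) + q ^ (-2 : ℤ))
    (hρ : ρ = -(a * a') * (q ^ (2 : ℤ) - q ^ (-2 : ℤ)) ^ 2)
    (hρs : ρs = -(b * b') * (q ^ (2 : ℤ) - q ^ (-2 : ℤ)) ^ 2)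
    (hω : ω = (q - q⁻¹) ^ 2 *
      ((q ^ ((d : ℤ) + 1) + q ^ (-(d : ℤ) - 1)) * ξ - (a + a') * (b + b')))
    (hη : η = -((q - q⁻¹) * (q ^ (2 : ℤ) - q ^ (-2 : ℤ)) *
      ((a + a') * ξ - a * a' * (b + b') * (q ^ ((d : ℤ) + 1) + q ^ (-(d : ℤ) - 1)))))
    (hηs : ηs = -((q - q⁻¹) * (q ^ (2 : ℤ) - q ^ (-2 : ℤ)) *
      ((b + b') * ξ - b * b' * (a + a') * (q ^ ((d : ℤ) + 1) + q ^ (-(d : ℤ) - 1)))))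
    (x y z : ℕ → F)
    (hyz : ∀ i : ℕ, 1 ≤ i → i ≤ d → y i * z i ≠ 0)
    (hy0 : y 0 = 0) (hyd1 : y (d + 1) = 0)
    (A As : Matrix (Fin (d + 1)) (Fin (d + 1)) F)
    (hA : ∀ i j : Fin (d + 1), A i j =
      if (i : ℕ) = (j : ℕ) then θ (i : ℕ)
      else if (i : ℕ) = (j : ℕ) + 1 then 1 else 0)
    (hAs : ∀ i j : Fin (d + 1), As i j =
      if (i : ℕ) = (j : ℕ) then x (i : ℕ)
      else if (i : ℕ) = (j : ℕ) + 1 then z (i : ℕ)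
      else if (j : ℕ) = (i : ℕ) + 1 then y (j : ℕ) else 0)
    (hAW1 : A ^ 2 * As - β • (A * As * A) + As * A ^ 2 - ρ • As =
      ω • A + η • (1 : Matrix (Fin (d + 1)) (Fin (d + 1)) F))
    (hAW2 : As ^ 2 * A - β • (As * A * As) + A * As ^ 2 - ρs • A =
      ω • As + ηs • (1 : Matrix (Fin (d + 1)) (Fin (d + 1)) F)) :
    ∀ i : ℕ, 1 ≤ i → i ≤ d →
      y (i - 1) - β * y i + y (i + 1) =
        (θ ((i : ℤ) - 2) - θ ((i : ℤ) - 1)) * x (i - 1) +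
          (θ ((i : ℤ) + 1) - θ (i : ℕ)) * x i + ω := by
  intro i hi1 hi2
  -- three-term recurrence for θ
  have key : ∀ j : ℤ, β * θ j = θ (j - 1) + θ (j + 1) := by
    intro j
    rw [hθ j, hθ (j-1), hθ (j+1), hβ,
        show 2*(j-1) - (d:ℤ) = (2*j - d) + (-2) by ring,
        show (d:ℤ) - 2*(j-1) = (d - 2*j) + 2 by ring,
        show 2*(j+1) - (d:ℤ) = (2*j - d) + 2 by ring,
        show (d:ℤ) - 2*(j+1) = (d - 2*j) + (-2) by ring]
    simp only [zpow_add₀ hq]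
    ring
  have hk1 : β * θ ((i:ℤ) - 1) = θ ((i:ℤ) - 2) + θ (i:ℤ) := by
    have h := key ((i:ℤ) - 1)
    rwa [show (i:ℤ) - 1 - 1 = (i:ℤ) - 2 by ring, show (i:ℤ) - 1 + 1 = (i:ℤ) by ring] at h
  have hk2 : β * θ (i:ℤ) = θ ((i:ℤ) - 1) + θ ((i:ℤ) + 1) := key (i:ℤ)
  have hyne : y i ≠ 0 := left_ne_zero_of_mul (hyz i hi1 hi2)
  have hplt : i - 1 < d + 1 := by omega
  have hrlt : i < d + 1 := by omega
  set p : Fin (d+1) := ⟨i - 1, hplt⟩ with hpdef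
  set r : Fin (d+1) := ⟨i, hrlt⟩ with hrdef
  have hp : (p : ℕ) = i - 1 := rfl
  have hr : (r : ℕ) = i := rfl
  have hpr : p ≠ r := Fin.ne_of_val_ne (by omega)
  -- simple entries
  have hApr : A p r = 0 := by
    rw [hA]; split_ifs <;> first | rfl | omega
  have hAspr : As p r = y i := by
    rw [hAs]; simp only [hp, hr]; split_ifs <;> first | rfl | omega
  have hAsrr : As r r = x i := by
    rw [hAs]; simp only [hr]; split_ifs <;> first | rfl | omega
  have hAspp : As p p = x (i-1) := by
    rw [hAs]; simp only [hp]; split_ifs <;> first | rfl | omega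
  have hArr : A r r = θ (i:ℕ) := by
    rw [hA]; simp only [hr]; split_ifs <;> first | rfl | omega
  have hApp : A p p = θ ((i-1:ℕ)) := by
    rw [hA]; simp only [hp]; split_ifs <;> first | rfl | omega
  -- (As*As) p r
  have hS1 : (As * As) p r = x (i-1) * y i + y i * x i := by
    rw [Matrix.mul_apply,
        Finset.sum_eq_add_of_mem p r (Finset.mem_univ _) (Finset.mem_univ _) hpr ?_,
        hAspp, hAspr, hAsrr]
    intro c _ hc
    have hc1 : (c:ℕ) ≠ i - 1 := fun h => hc.1 (Fin.ext (by omega))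
    have hc2 : (c:ℕ) ≠ i := fun h => hc.2 (Fin.ext (by omega))
    rw [hAs, hAs]; simp only [hp, hr]
    split_ifs <;> first | ring1 | omega
  -- (As*A) p p
  have hM1 : (As * A) p p = x (i-1) * θ ((i-1:ℕ)) + y i * 1 := by
    rw [Matrix.mul_apply,
        Finset.sum_eq_add_of_mem p r (Finset.mem_univ _) (Finset.mem_univ _) hpr ?_,
        hAspp, hAspr, hApp]
    · rw [show A r p = 1 by rw [hA]; simp only [hp, hr]; split_ifs <;> first | rfl | omega]
    intro c _ hc
    have hc1 : (c:ℕ) ≠ i - 1 := fun h => hc.1 (Fin.ext (by omega))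
    have hc2 : (c:ℕ) ≠ i := fun h => hc.2 (Fin.ext (by omega))
    rw [hA c p]; simp only [hp]
    split_ifs <;> first | ring1 | omega
  -- (As*A) p r
  have hM2 : (As * A) p r = y i * θ (i:ℕ) := by
    rw [Matrix.mul_apply,
        Finset.sum_eq_single_of_mem r (Finset.mem_univ _) ?_, hAspr, hArr]
    intro c _ hc
    have hc2 : (c:ℕ) ≠ i := fun h => hc (Fin.ext (by omega))
    rw [hAs p c, hA c r]; simp only [hp, hr]
    split_ifs <;> first | ring1 | omega
  -- E1 = (As*As*A) p r
  have hE1 : (As * As * A) p r = (x (i-1) * y i + y i * x i) * θ (i:ℕ) + y i * y (i+1) := by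
    rw [Matrix.mul_apply]
    by_cases hid : i < d
    · have hslt : i + 1 < d + 1 := by omega
      set s : Fin (d+1) := ⟨i + 1, hslt⟩ with hsdef
      have hs : (s : ℕ) = i + 1 := rfl
      have hrs : r ≠ s := Fin.ne_of_val_ne (by omega)
      rw [Finset.sum_eq_add_of_mem r s (Finset.mem_univ _) (Finset.mem_univ _) hrs ?_,
          hS1, hArr]
      · have h2 : (As * As) p s = y i * y (i+1) := by
          rw [Matrix.mul_apply,
              Finset.sum_eq_single_of_mem r (Finset.mem_univ _) ?_, hAspr]
          · rw [show As r s = y (i+1) by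
              rw [hAs]; simp only [hr, hs]; split_ifs <;> first | rfl | omega]
          intro c _ hc
          have hc2 : (c:ℕ) ≠ i := fun h => hc (Fin.ext (by omega))
          rw [hAs p c, hAs c s]; simp only [hp, hs]
          split_ifs <;> first | ring1 | omega
        rw [h2, show A s r = 1 by
            rw [hA]; simp only [hr, hs]; split_ifs <;> first | rfl | omega]
        ring
      intro c _ hc
      have hc1 : (c:ℕ) ≠ i := fun h => hc.1 (Fin.ext (by omega))
      have hc2 : (c:ℕ) ≠ i + 1 := fun h => hc.2 (Fin.ext (by omega))
      rw [hA c r]; simp only [hr]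
      split_ifs <;> first | ring1 | omega
    · have hideq : i = d := by omega
      rw [Finset.sum_eq_single_of_mem r (Finset.mem_univ _) ?_, hS1, hArr]
      · rw [show y (i+1) = 0 by rw [hideq]; exact hyd1]; ring
      intro c _ hc
      have hc1 : (c:ℕ) ≠ i := fun h => hc (Fin.ext (by omega))
      have hclt : (c:ℕ) < d + 1 := c.isLt
      rw [hA c r]; simp only [hr]
      split_ifs <;> first | ring1 | omega
  -- E2 = (As*A*As) p r
  have hE2 : (As * A * As) p r =
      (x (i-1) * θ ((i-1:ℕ)) + y i * 1) * y i + (y i * θ (i:ℕ)) * x i := by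
    rw [Matrix.mul_apply,
        Finset.sum_eq_add_of_mem p r (Finset.mem_univ _) (Finset.mem_univ _) hpr ?_,
        hM1, hM2, hAspr, hAsrr]
    intro c _ hc
    have hc1 : (c:ℕ) ≠ i - 1 := fun h => hc.1 (Fin.ext (by omega))
    have hc2 : (c:ℕ) ≠ i := fun h => hc.2 (Fin.ext (by omega))
    by_cases hcs : (c:ℕ) = i + 1
    · have h0 : (As * A) p c = 0 := by
        rw [Matrix.mul_apply]
        apply Finset.sum_eq_zero
        intro k _
        rw [hAs p k, hA k c]; simp only [hp]
        split_ifs <;> first | ring1 | omega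
      rw [h0, zero_mul]
    · rw [hAs c r]; simp only [hr]
      split_ifs <;> first | ring1 | omega
  -- E3 = (A*(As*As)) p r
  have hE3 : (A * (As * As)) p r =
      θ ((i-1:ℕ)) * (x (i-1) * y i + y i * x i) + 1 * (y (i-1) * y i) := by
    rw [Matrix.mul_apply]
    by_cases hi2' : 2 ≤ i
    · have htlt : i - 2 < d + 1 := by omega
      set t : Fin (d+1) := ⟨i - 2, htlt⟩ with htdef
      have ht : (t : ℕ) = i - 2 := rfl
      have hpt : p ≠ t := Fin.ne_of_val_ne (by omega)
      rw [Finset.sum_eq_add_of_mem p t (Finset.mem_univ _) (Finset.mem_univ _) hpt ?_,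
          hApp, hS1]
      · have h3 : (As * As) t r = y (i-1) * y i := by
          rw [Matrix.mul_apply,
              Finset.sum_eq_single_of_mem p (Finset.mem_univ _) ?_, hAspr]
          · rw [show As t p = y (i-1) by
              rw [hAs]; simp only [ht, hp]; split_ifs <;> first | rfl | omega]
          intro c _ hc
          have hc1 : (c:ℕ) ≠ i - 1 := fun h => hc (Fin.ext (by omega))
          rw [hAs t c, hAs c r]; simp only [ht, hr]
          split_ifs <;> first | ring1 | omega
        rw [h3, show A p t = 1 by
            rw [hA]; simp only [hp, ht]; split_ifs <;> first | rfl | omega]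
      intro c _ hc
      have hc1 : (c:ℕ) ≠ i - 1 := fun h => hc.1 (Fin.ext (by omega))
      have hc2 : (c:ℕ) ≠ i - 2 := fun h => hc.2 (Fin.ext (by omega))
      rw [hA p c]; simp only [hp]
      split_ifs <;> first | ring1 | omega
    · have hieq : i = 1 := by omega
      rw [Finset.sum_eq_single_of_mem p (Finset.mem_univ _) ?_, hApp, hS1]
      · rw [show y (i-1) = 0 by rw [hieq]; exact hy0]; ring
      intro c _ hc
      have hc1 : (c:ℕ) ≠ i - 1 := fun h => hc (Fin.ext (by omega))
      rw [hA p c]; simp only [hp]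
      split_ifs <;> first | ring1 | omega
  -- extract the (p, r) entry of the second Askey–Wilson relation
  have hE : (As * As * A) p r - β * (As * A * As) p r + (A * (As * As)) p r
      - ρs * A p r = ω * As p r + ηs * 0 := by
    have h := congrFun (congrFun hAW2 p) r
    simpa only [pow_two, Matrix.sub_apply, Matrix.add_apply, Matrix.smul_apply,
      smul_eq_mul, Matrix.one_apply, if_neg hpr] using h
  rw [hE1, hE2, hE3, hApr, hAspr] at hE
  have hcast : ((i-1:ℕ) : ℤ) = (i:ℤ) - 1 := by omega
  rw [hcast] at hE
  have hfin : (y (i - 1) - β * y i + y (i + 1)) * y i =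
      ((θ ((i : ℤ) - 2) - θ ((i : ℤ) - 1)) * x (i - 1) +
        (θ ((i : ℤ) + 1) - θ (i : ℕ)) * x i + ω) * y i := by
    linear_combination hE + (x (i-1) * y i) * hk1 + (x i * y i) * hk2
  exact mul_right_cancel₀ hyne hfin
end

section
/- With the hypotheses of the Askey–Wilson setting below, (θ_0 − β·θ_0 + θ_1)·y_1 = ((β − 2)·θ_0² + ρ)·x_0 + ω·θ_0 + η, and (θ_{d−1} + θ_d − β·θ_d)·y_d = ((β − 2)·θ_d² + ρ)·x_d + ω·θ_d + η. -/
/-!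
Row 0 of the lower bidiagonal matrix `A` is `θ₀ e₀ᵀ`, its column 0 is supported on `{0, 1}`, and
row 0 of the tridiagonal `A*` is supported on `{0, 1}`. Hence the `(0,0)` entry of the first
Askey–Wilson relation involves only `θ₀, θ₁, x₀, y₁`, and reading it off is the first identity.
The expression `A²B - βABA + BA² - ρB` is invariant under reversing all products, so it commutes
with transposition; the `(d,d)` entry is therefore the same computation for the transposed pair,
where column `d` of `A` is `θ_d e_d`.
-/

open Matrix

section AskeyWilsonEntries

variable {ι R : Type*} [Fintype ι] [CommRing R] {A B M : Matrix ι ι R} {i j : ι}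

theorem mul_apply_of_row_eq_zero (hA : ∀ k, k ≠ i → A i k = 0) (l : ι) :
    (A * M) i l = A i i * M i l := by
  rw [mul_apply, Fintype.sum_eq_single i fun k hk => by rw [hA k hk, zero_mul]]

theorem mul_apply_of_row_eq_zero₂ (hij : i ≠ j) (hA : ∀ k, k ≠ i ∧ k ≠ j → A i k = 0) (l : ι) :
    (A * M) i l = A i i * M i l + A i j * M j l := by
  rw [mul_apply, Fintype.sum_eq_add i j hij fun k hk => by rw [hA k hk, zero_mul]]

theorem mul_apply_of_col_eq_zero₂ (hij : i ≠ j) (hA : ∀ k, k ≠ i ∧ k ≠ j → A k i = 0) (l : ι) :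
    (M * A) l i = M l i * A i i + M l j * A j i := by
  rw [mul_apply, Fintype.sum_eq_add i j hij fun k hk => by rw [hA k hk, mul_zero]]

variable [DecidableEq ι]

def askeyWilsonExpr (β ρ : R) (A B : Matrix ι ι R) : Matrix ι ι R :=
  A ^ 2 * B - β • (A * B * A) + B * A ^ 2 - ρ • B

theorem askeyWilsonExpr_transpose (β ρ : R) (A B : Matrix ι ι R) :
    askeyWilsonExpr β ρ Aᵀ Bᵀ = (askeyWilsonExpr β ρ A B)ᵀ := by
  simp only [askeyWilsonExpr, transpose_sub, transpose_add, transpose_smul, transpose_mul,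
    transpose_pow, Matrix.mul_assoc]
  abel

theorem askeyWilsonExpr_apply_self_of_row_eq_zero (β ρ : R) (hij : i ≠ j)
    (hArow : ∀ k, k ≠ i → A i k = 0) (hAcol : ∀ k, k ≠ i ∧ k ≠ j → A k i = 0)
    (hBrow : ∀ k, k ≠ i ∧ k ≠ j → B i k = 0) :
    askeyWilsonExpr β ρ A B i i =
      ((2 - β) * A i i ^ 2 - ρ) * B i i + (A i i - β * A i i + A j j) * A j i * B i j := by
  have hAA : (A * A) j i = A j i * A i i + A j j * A j i :=
    mul_apply_of_col_eq_zero₂ hij hAcol j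
  simp only [askeyWilsonExpr, Matrix.sub_apply, Matrix.add_apply, Matrix.smul_apply, smul_eq_mul,
    pow_two, Matrix.mul_assoc, mul_apply_of_row_eq_zero hArow,
    mul_apply_of_row_eq_zero₂ hij hBrow, hAA]
  ring

theorem askeyWilsonExpr_apply_self_of_col_eq_zero (β ρ : R) (hij : i ≠ j)
    (hAcol : ∀ k, k ≠ i → A k i = 0) (hArow : ∀ k, k ≠ i ∧ k ≠ j → A i k = 0)
    (hBcol : ∀ k, k ≠ i ∧ k ≠ j → B k i = 0) :
    askeyWilsonExpr β ρ A B i i =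
      ((2 - β) * A i i ^ 2 - ρ) * B i i + (A i i - β * A i i + A j j) * A i j * B j i := by
  rw [← transpose_apply (askeyWilsonExpr β ρ A B), ← askeyWilsonExpr_transpose,
    askeyWilsonExpr_apply_self_of_row_eq_zero β ρ hij hAcol hArow hBcol]
  rfl

end AskeyWilsonEntries

section Corners

variable {R : Type*} [CommRing R] {n : ℕ}

def lowerBidiagonal (D : ℕ → R) : Matrix (Fin n) (Fin n) R :=
  of fun i j => if (i : ℕ) = j then D i else if (i : ℕ) = j + 1 then 1 else 0

def tridiagonal (x y z : ℕ → R) : Matrix (Fin n) (Fin n) R :=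
  of fun i j => if (i : ℕ) = j then x i else if (i : ℕ) = j + 1 then z i
    else if (j : ℕ) = i + 1 then y j else 0

variable {D x y z : ℕ → R} {i j : Fin n}

theorem lowerBidiagonal_apply_self : lowerBidiagonal D i i = D i := if_pos rfl

theorem lowerBidiagonal_apply_of_eq_succ (h : (i : ℕ) = j + 1) : lowerBidiagonal D i j = 1 := by
  simp [lowerBidiagonal, h]

theorem lowerBidiagonal_apply_eq_zero (h₁ : (i : ℕ) ≠ j) (h₂ : (i : ℕ) ≠ j + 1) :
    lowerBidiagonal D i j = 0 := by
  simp [lowerBidiagonal, h₁, h₂]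

theorem tridiagonal_apply_self : tridiagonal x y z i i = x i := if_pos rfl

theorem tridiagonal_apply_of_succ_eq (h : (j : ℕ) = i + 1) : tridiagonal x y z i j = y j := by
  have h₁ : (i : ℕ) ≠ j := by omega
  have h₂ : (i : ℕ) ≠ j + 1 := by omega
  simp only [tridiagonal, of_apply, if_neg h₁, if_neg h₂, if_pos h]

theorem tridiagonal_apply_eq_zero (h₁ : (i : ℕ) ≠ j) (h₂ : (i : ℕ) ≠ j + 1) (h₃ : (j : ℕ) ≠ i + 1) :
    tridiagonal x y z i j = 0 := by
  simp [tridiagonal, h₁, h₂, h₃]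

theorem askeyWilsonExpr_lowerBidiagonal_tridiagonal_apply_zero_zero (β ρ : R) :
    askeyWilsonExpr β ρ (lowerBidiagonal (n := n + 2) D) (tridiagonal x y z) 0 0 =
      ((2 - β) * D 0 ^ 2 - ρ) * x 0 + (D 0 - β * D 0 + D 1) * y 1 := by
  rw [askeyWilsonExpr_apply_self_of_row_eq_zero β ρ (j := 1) (by simp),
    lowerBidiagonal_apply_self, lowerBidiagonal_apply_self,
    lowerBidiagonal_apply_of_eq_succ (by simp), tridiagonal_apply_self,
    tridiagonal_apply_of_succ_eq (by simp)]
  · simp only [Fin.val_zero, Fin.val_one]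
    ring
  all_goals
    intro k hk
    first | apply lowerBidiagonal_apply_eq_zero | apply tridiagonal_apply_eq_zero
  all_goals
    simp only [ne_eq, Fin.ext_iff, Fin.val_zero, Fin.val_one] at hk ⊢
    omega

theorem askeyWilsonExpr_lowerBidiagonal_tridiagonal_apply_last_last (β ρ : R) :
    askeyWilsonExpr β ρ (lowerBidiagonal D) (tridiagonal x y z) (Fin.last (n + 1))
        (Fin.last (n + 1)) =
      ((2 - β) * D (n + 1) ^ 2 - ρ) * x (n + 1) +
        (D (n + 1) - β * D (n + 1) + D n) * y (n + 1) := by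
  rw [askeyWilsonExpr_apply_self_of_col_eq_zero β ρ (j := (Fin.last n).castSucc)
    (Fin.castSucc_lt_last _).ne',
    lowerBidiagonal_apply_self, lowerBidiagonal_apply_self,
    lowerBidiagonal_apply_of_eq_succ (by simp), tridiagonal_apply_self,
    tridiagonal_apply_of_succ_eq (by simp)]
  · simp only [Fin.val_last, Fin.val_castSucc]
    ring
  all_goals
    intro k hk
    first | apply lowerBidiagonal_apply_eq_zero | apply tridiagonal_apply_eq_zero
  all_goals
    simp only [ne_eq, Fin.ext_iff, Fin.val_last, Fin.val_castSucc] at hk ⊢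
    omega

end Corners

theorem stmt13_general {F : Type*} [Field F] {d : ℕ} (hd : 3 ≤ d)
    (θ : ℤ → F)
    (β ρ ω η : F)
    (x y z : ℕ → F)
    (A As : Matrix (Fin (d + 1)) (Fin (d + 1)) F)
    (hA : ∀ i j : Fin (d + 1), A i j =
      if (i : ℕ) = (j : ℕ) then θ (i : ℕ)
      else if (i : ℕ) = (j : ℕ) + 1 then 1 else 0)
    (hAs : ∀ i j : Fin (d + 1), As i j =
      if (i : ℕ) = (j : ℕ) then x (i : ℕ)
      else if (i : ℕ) = (j : ℕ) + 1 then z (i : ℕ)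
      else if (j : ℕ) = (i : ℕ) + 1 then y (j : ℕ) else 0)
    (hAW1 : A ^ 2 * As - β • (A * As * A) + As * A ^ 2 - ρ • As =
      ω • A + η • (1 : Matrix (Fin (d + 1)) (Fin (d + 1)) F)) :
    (θ 0 - β * θ 0 + θ 1) * y 1 =
      ((β - 2) * θ 0 ^ 2 + ρ) * x 0 + ω * θ 0 + η ∧
    (θ ((d : ℤ) - 1) + θ (d : ℕ) - β * θ (d : ℕ)) * y d =
      ((β - 2) * θ (d : ℕ) ^ 2 + ρ) * x d + ω * θ (d : ℕ) + η := by
  obtain ⟨n, rfl⟩ : ∃ n, d = n + 1 := ⟨d - 1, by omega⟩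
  obtain rfl : A = lowerBidiagonal fun k => θ k := Matrix.ext hA
  obtain rfl : As = tridiagonal x y z := Matrix.ext hAs
  change askeyWilsonExpr β ρ _ _ = _ at hAW1
  have h_first := congrFun (congrFun hAW1 0) 0
  have h_last := congrFun (congrFun hAW1 (Fin.last _)) (Fin.last _)
  rw [askeyWilsonExpr_lowerBidiagonal_tridiagonal_apply_zero_zero] at h_first
  rw [askeyWilsonExpr_lowerBidiagonal_tridiagonal_apply_last_last] at h_last
  simp only [Matrix.add_apply, Matrix.smul_apply, lowerBidiagonal_apply_self, smul_eq_mul,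
    Matrix.one_apply_eq, Fin.val_zero, Fin.val_last] at h_first h_last
  have hθ_pred : θ ((n + 1 : ℕ) - 1 : ℤ) = θ n := by push_cast; ring_nf
  refine ⟨by linear_combination h_first, ?_⟩
  rw [hθ_pred]
  linear_combination h_last

/-- stmt13 of the paper, in the Askey–Wilson setting. -/
theorem stmt13 {F : Type*} [Field F] [IsAlgClosed F] {d : ℕ} (hd : 3 ≤ d)
    (q a a' b b' ξ : F) (hq : q ≠ 0)
    (hqru : ∀ n : ℕ, 1 ≤ n → q ^ n ≠ 1)
    (θ : ℤ → F)
    (hθ : ∀ i : ℤ, θ i = a * q ^ (2 * i - (d : ℤ)) + a' * q ^ ((d : ℤ) - 2 * i))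
    (hθdist : ∀ i j : ℕ, i ≤ d → j ≤ d → i ≠ j → θ i ≠ θ j)
    (β ρ ρs ω η ηs : F)
    (hβ : β = q ^ (2 : ℤ) + q ^ (-2 : ℤ))
    (hρ : ρ = -(a * a') * (q ^ (2 : ℤ) - q ^ (-2 : ℤ)) ^ 2)
    (hρs : ρs = -(b * b') * (q ^ (2 : ℤ) - q ^ (-2 : ℤ)) ^ 2)
    (hω : ω = (q - q⁻¹) ^ 2 *
      ((q ^ ((d : ℤ) + 1) + q ^ (-(d : ℤ) - 1)) * ξ - (a + a') * (b + b')))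
    (hη : η = -((q - q⁻¹) * (q ^ (2 : ℤ) - q ^ (-2 : ℤ)) *
      ((a + a') * ξ - a * a' * (b + b') * (q ^ ((d : ℤ) + 1) + q ^ (-(d : ℤ) - 1)))))
    (hηs : ηs = -((q - q⁻¹) * (q ^ (2 : ℤ) - q ^ (-2 : ℤ)) *
      ((b + b') * ξ - b * b' * (a + a') * (q ^ ((d : ℤ) + 1) + q ^ (-(d : ℤ) - 1)))))
    (x y z : ℕ → F)
    (hyz : ∀ i : ℕ, 1 ≤ i → i ≤ d → y i * z i ≠ 0)
    (hy0 : y 0 = 0) (hyd1 : y (d + 1) = 0)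
    (A As : Matrix (Fin (d + 1)) (Fin (d + 1)) F)
    (hA : ∀ i j : Fin (d + 1), A i j =
      if (i : ℕ) = (j : ℕ) then θ (i : ℕ)
      else if (i : ℕ) = (j : ℕ) + 1 then 1 else 0)
    (hAs : ∀ i j : Fin (d + 1), As i j =
      if (i : ℕ) = (j : ℕ) then x (i : ℕ)
      else if (i : ℕ) = (j : ℕ) + 1 then z (i : ℕ)
      else if (j : ℕ) = (i : ℕ) + 1 then y (j : ℕ) else 0)
    (hAW1 : A ^ 2 * As - β • (A * As * A) + As * A ^ 2 - ρ • As =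
      ω • A + η • (1 : Matrix (Fin (d + 1)) (Fin (d + 1)) F))
    (hAW2 : As ^ 2 * A - β • (As * A * As) + A * As ^ 2 - ρs • A =
      ω • As + ηs • (1 : Matrix (Fin (d + 1)) (Fin (d + 1)) F)) :
    (θ 0 - β * θ 0 + θ 1) * y 1 =
      ((β - 2) * θ 0 ^ 2 + ρ) * x 0 + ω * θ 0 + η ∧
    (θ ((d : ℤ) - 1) + θ (d : ℕ) - β * θ (d : ℕ)) * y d =
      ((β - 2) * θ (d : ℕ) ^ 2 + ρ) * x d + ω * θ (d : ℕ) + η :=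
  stmt13_general hd θ β ρ ω η x y z A As hA hAs hAW1
end

section
/- With the hypotheses of the Askey–Wilson setting below, ((1 − β)·x_0 + x_1 + (θ_0 − θ_2)·z_1)·y_1 = (β − 2)·θ_0·x_0² + ω·x_0 + ρ*·θ_0 + η*. -/
open Finset in
lemma sum_two_aux {F : Type*} [AddCommMonoid F] {n : ℕ} (f : Fin n → F) (i j : Fin n)
    (hij : i ≠ j) (h : ∀ k, k ≠ i → k ≠ j → f k = 0) :
    (∑ k, f k) = f i + f j := by
  classical
  rw [← Finset.sum_subset (Finset.subset_univ {i, j})]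
  · rw [Finset.sum_insert (by simp [hij]), Finset.sum_singleton]
  · intro k _ hk
    simp only [Finset.mem_insert, Finset.mem_singleton, not_or] at hk
    exact h k hk.1 hk.2

/-- stmt14 of the paper, in the Askey–Wilson setting. -/
theorem stmt14 {F : Type*} [Field F] [IsAlgClosed F] {d : ℕ} (hd : 3 ≤ d)
    (q a a' b b' ξ : F) (hq : q ≠ 0)
    (hqru : ∀ n : ℕ, 1 ≤ n → q ^ n ≠ 1)
    (θ : ℤ → F)
    (hθ : ∀ i : ℤ, θ i = a * q ^ (2 * i - (d : ℤ)) + a' * q ^ ((d : ℤ) - 2 * i))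
    (hθdist : ∀ i j : ℕ, i ≤ d → j ≤ d → i ≠ j → θ i ≠ θ j)
    (β ρ ρs ω η ηs : F)
    (hβ : β = q ^ (2 : ℤ) + q ^ (-2 : ℤ))
    (hρ : ρ = -(a * a') * (q ^ (2 : ℤ) - q ^ (-2 : ℤ)) ^ 2)
    (hρs : ρs = -(b * b') * (q ^ (2 : ℤ) - q ^ (-2 : ℤ)) ^ 2)
    (hω : ω = (q - q⁻¹) ^ 2 *
      ((q ^ ((d : ℤ) + 1) + q ^ (-(d : ℤ) - 1)) * ξ - (a + a') * (b + b')))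
    (hη : η = -((q - q⁻¹) * (q ^ (2 : ℤ) - q ^ (-2 : ℤ)) *
      ((a + a') * ξ - a * a' * (b + b') * (q ^ ((d : ℤ) + 1) + q ^ (-(d : ℤ) - 1)))))
    (hηs : ηs = -((q - q⁻¹) * (q ^ (2 : ℤ) - q ^ (-2 : ℤ)) *
      ((b + b') * ξ - b * b' * (a + a') * (q ^ ((d : ℤ) + 1) + q ^ (-(d : ℤ) - 1)))))
    (x y z : ℕ → F)
    (hyz : ∀ i : ℕ, 1 ≤ i → i ≤ d → y i * z i ≠ 0)
    (hy0 : y 0 = 0) (hyd1 : y (d + 1) = 0)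
    (A As : Matrix (Fin (d + 1)) (Fin (d + 1)) F)
    (hA : ∀ i j : Fin (d + 1), A i j =
      if (i : ℕ) = (j : ℕ) then θ (i : ℕ)
      else if (i : ℕ) = (j : ℕ) + 1 then 1 else 0)
    (hAs : ∀ i j : Fin (d + 1), As i j =
      if (i : ℕ) = (j : ℕ) then x (i : ℕ)
      else if (i : ℕ) = (j : ℕ) + 1 then z (i : ℕ)
      else if (j : ℕ) = (i : ℕ) + 1 then y (j : ℕ) else 0)
    (hAW1 : A ^ 2 * As - β • (A * As * A) + As * A ^ 2 - ρ • As =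
      ω • A + η • (1 : Matrix (Fin (d + 1)) (Fin (d + 1)) F))
    (hAW2 : As ^ 2 * A - β • (As * A * As) + A * As ^ 2 - ρs • A =
      ω • As + ηs • (1 : Matrix (Fin (d + 1)) (Fin (d + 1)) F)) :
    ((1 - β) * x 0 + x 1 + (θ 0 - θ 2) * z 1) * y 1 =
      (β - 2) * θ 0 * x 0 ^ 2 + ω * x 0 + ρs * θ 0 + ηs := by
  -- the θ identity
  have hθβ : θ 0 + θ 2 = β * θ 1 := by
    have hs : q ^ ((d:ℕ):ℤ) ≠ 0 := zpow_ne_zero _ hq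
    rw [hθ 0, hθ 1, hθ 2, hβ]
    simp only [zpow_sub₀ hq]
    have e0 : q ^ (2*(0:ℤ)) = 1 := by norm_num
    have e1 : q ^ (2*(1:ℤ)) = q * q := by
      rw [show (2*(1:ℤ)) = 1+1 by ring, zpow_add₀ hq, zpow_one]
    have e2 : q ^ (2*(2:ℤ)) = q * q * (q * q) := by
      rw [show (2*(2:ℤ)) = (1+1)+(1+1) by ring, zpow_add₀ hq, zpow_add₀ hq, zpow_one]
    have e3 : q ^ (2:ℤ) = q * q := by
      rw [show ((2:ℤ)) = 1+1 by ring, zpow_add₀ hq, zpow_one]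
    have e4 : q ^ (-2:ℤ) = (q * q)⁻¹ := by
      rw [show ((-2:ℤ)) = -(1+1) by ring, zpow_neg, zpow_add₀ hq, zpow_one]
    rw [e0, e1, e2, e3, e4]
    have hu : (q*q) * (q*q)⁻¹ = 1 := mul_inv_cancel₀ (by simp [hq])
    have hv : q * q⁻¹ = 1 := mul_inv_cancel₀ hq
    linear_combination (-(a / q ^ ((d:ℕ):ℤ))) * hu +
      (- a' * q ^ ((d:ℕ):ℤ) * (1 + q*q⁻¹)) * hv
  -- indices
  have h0 : 0 < d + 1 := by omega
  have h1 : 1 < d + 1 := by omega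
  have h2 : 2 < d + 1 := by omega
  set i0 : Fin (d+1) := ⟨0, h0⟩ with hi0
  set i1 : Fin (d+1) := ⟨1, h1⟩ with hi1
  set i2 : Fin (d+1) := ⟨2, h2⟩ with hi2
  have h01 : i0 ≠ i1 := Fin.ne_of_val_ne (show (0:ℕ) ≠ 1 by omega)
  have hval : ∀ (k : Fin (d+1)) (m : ℕ) (hm : m < d+1), k ≠ ⟨m, hm⟩ → (k:ℕ) ≠ m := by
    intro k m hm h
    simpa [Fin.ext_iff] using h
  -- entries of A
  have hA00 : A i0 i0 = θ 0 := by rw [hA]; norm_num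
  have hA10 : A i1 i0 = 1 := by rw [hA]; norm_num
  have hA11 : A i1 i1 = θ 1 := by rw [hA]; norm_num
  have hA0k : ∀ k : Fin (d+1), k ≠ i0 → A i0 k = 0 := by
    intro k hk
    have hk' : (0:ℕ) ≠ (k:ℕ) := fun h => (hval k 0 h0 hk) h.symm
    rw [hA]
    simp only [hi0]
    rw [if_neg hk', if_neg (by omega)]
  have hAk0 : ∀ k : Fin (d+1), k ≠ i0 → k ≠ i1 → A k i0 = 0 := by
    intro k hk0 hk1
    have hk0' := hval k 0 h0 hk0
    have hk1' := hval k 1 h1 hk1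
    rw [hA]
    simp only [hi0]
    rw [if_neg (by omega), if_neg (by omega)]
  have hAk1 : ∀ k : Fin (d+1), k ≠ i1 → k ≠ i2 → A k i1 = 0 := by
    intro k hk1 hk2
    have hk1' := hval k 1 h1 hk1
    have hk2' := hval k 2 h2 hk2
    rw [hA]
    simp only [hi1]
    rw [if_neg (by omega), if_neg (by omega)]
  -- entries of As
  have hAs00 : As i0 i0 = x 0 := by rw [hAs]; norm_num
  have hAs01 : As i0 i1 = y 1 := by rw [hAs]; norm_num
  have hAs10 : As i1 i0 = z 1 := by rw [hAs]; norm_num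
  have hAs11 : As i1 i1 = x 1 := by rw [hAs]; norm_num
  have hAs0k : ∀ k : Fin (d+1), k ≠ i0 → k ≠ i1 → As i0 k = 0 := by
    intro k hk0 hk1
    have hk0' := hval k 0 h0 hk0
    have hk1' := hval k 1 h1 hk1
    rw [hAs]
    simp only [hi0]
    rw [if_neg (by omega), if_neg (by omega), if_neg (by omega)]
  have hAsk0 : ∀ k : Fin (d+1), k ≠ i0 → k ≠ i1 → As k i0 = 0 := by
    intro k hk0 hk1
    have hk0' := hval k 0 h0 hk0
    have hk1' := hval k 1 h1 hk1
    rw [hAs]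
    simp only [hi0]
    rw [if_neg (by omega), if_neg (by omega), if_neg (by omega)]
  -- product entries
  have hP1 : (As * A) i0 i0 = x 0 * θ 0 + y 1 * 1 := by
    rw [Matrix.mul_apply, sum_two_aux _ i0 i1 h01
      (fun k hk0 hk1 => by rw [hAk0 k hk0 hk1, mul_zero]),
      hAs00, hAs01, hA00, hA10]
  have hP2 : (As * A) i0 i1 = x 0 * 0 + y 1 * θ 1 := by
    rw [Matrix.mul_apply, sum_two_aux _ i0 i1 h01
      (fun k hk0 hk1 => by rw [hAs0k k hk0 hk1, zero_mul]),
      hAs00, hAs01, hA11, hA0k i1 h01.symm]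
  have hQ1 : (As * As) i0 i0 = x 0 * x 0 + y 1 * z 1 := by
    rw [Matrix.mul_apply, sum_two_aux _ i0 i1 h01
      (fun k hk0 hk1 => by rw [hAs0k k hk0 hk1, zero_mul]),
      hAs00, hAs01, hAs10]
  have hQ2 : (As * As) i0 i1 = x 0 * y 1 + y 1 * x 1 := by
    rw [Matrix.mul_apply, sum_two_aux _ i0 i1 h01
      (fun k hk0 hk1 => by rw [hAs0k k hk0 hk1, zero_mul]),
      hAs00, hAs01, hAs11]
  have hT1 : (As * As * A) i0 i0 =
      (x 0 * x 0 + y 1 * z 1) * θ 0 + (x 0 * y 1 + y 1 * x 1) * 1 := by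
    rw [Matrix.mul_apply, sum_two_aux _ i0 i1 h01
      (fun k hk0 hk1 => by rw [hAk0 k hk0 hk1, mul_zero]),
      hQ1, hQ2, hA00, hA10]
  have hT2 : (As * A * As) i0 i0 =
      (x 0 * θ 0 + y 1 * 1) * x 0 + (x 0 * 0 + y 1 * θ 1) * z 1 := by
    rw [Matrix.mul_apply, sum_two_aux _ i0 i1 h01
      (fun k hk0 hk1 => by rw [hAsk0 k hk0 hk1, mul_zero]),
      hP1, hP2, hAs00, hAs10]
  have hT3 : (A * (As * As)) i0 i0 = θ 0 * (x 0 * x 0 + y 1 * z 1) := by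
    rw [Matrix.mul_apply, Finset.sum_eq_single i0
      (fun k _ hk => by rw [hA0k k hk, zero_mul])
      (fun h => absurd (Finset.mem_univ i0) h),
      hA00, hQ1]
  -- extract the (0,0) entry of the second AW relation
  simp only [pow_two] at hAW2
  have hmain := congrArg (fun M : Matrix (Fin (d+1)) (Fin (d+1)) F => M i0 i0) hAW2
  simp only [Matrix.sub_apply, Matrix.add_apply, Matrix.smul_apply, smul_eq_mul,
    Matrix.one_apply_eq] at hmain
  rw [hT1, hT2, hT3, hA00, hAs00] at hmain
  linear_combination hmain - y 1 * z 1 * hθβ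
end

section
/- With the hypotheses of the Askey–Wilson setting below, assume moreover that z_i = z_1·q^{2−2i} for 1 ≤ i ≤ d. Then x_i = q^{−2i}·x_0 − a′·z_1·q^{d−3i+1}(q + q^{−1})(q^i − q^{−i}) for 0 ≤ i ≤ d. -/
/-!
Both Askey–Wilson relations are read off two places below the diagonal. Since `A` and `A*` vanish
below their first subdiagonal, only paths that descend twice in three steps contribute there, so
the superdiagonal `y` never enters. At `(k + 2, k)` the second relation, together with
`θ k + θ (k + 2) = β θ (k + 1)` and `z (k + 1) = q² z (k + 2)`, collapses to the recurrence
`q⁶ x (k + 2) = (q⁴ + q²) x (k + 1) - x k`, whose characteristic roots are `q⁻²` and `q⁻⁴`. At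
`(2, 0)` the first relation then determines `x 1`, after cancelling the factor `q⁶ - 1`. The claimed
formula is the solution of the recurrence with these initial values.
-/

namespace Matrix

variable {m : ℕ} {R : Type*}

def LowerBandwidthLE [Zero R] (M : Matrix (Fin m) (Fin m) R) (b : ℕ) : Prop :=
  ∀ i j : Fin m, j.val + b < i.val → M i j = 0

section Semiring

variable [NonUnitalNonAssocSemiring R] {M N P : Matrix (Fin m) (Fin m) R} {a b : ℕ}

theorem LowerBandwidthLE.mul (hM : M.LowerBandwidthLE a) (hN : N.LowerBandwidthLE b) :
    (M * N).LowerBandwidthLE (a + b) := by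
  intro i j hij
  rw [mul_apply]
  refine Finset.sum_eq_zero fun c _ => ?_
  by_cases hc : c.val + a < i.val
  · rw [hM i c hc, zero_mul]
  · rw [hN c j (by omega), mul_zero]

theorem LowerBandwidthLE.mul_apply_of_val_eq (hM : M.LowerBandwidthLE a)
    (hN : N.LowerBandwidthLE b) {i c j : Fin m} (hi : i.val = c.val + a)
    (hc : c.val = j.val + b) : (M * N) i j = M i c * N c j := by
  rw [mul_apply]
  refine Fintype.sum_eq_single c fun e he => ?_
  rcases lt_or_gt_of_ne (Fin.val_ne_of_ne he) with h | h
  · rw [hM i e (by omega), zero_mul]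
  · rw [hN e j (by omega), mul_zero]

theorem LowerBandwidthLE.mul_apply_of_val_eq_add_one (hM : M.LowerBandwidthLE (a + 1))
    (hN : N.LowerBandwidthLE 1) {i j' j : Fin m} (hi : i.val = j'.val + a)
    (hj' : j'.val = j.val + 1) : (M * N) i j = M i j * N j j + M i j' * N j' j := by
  rw [mul_apply]
  refine Fintype.sum_eq_add j j' (Fin.ne_of_val_ne (by omega)) fun c ⟨hcj, hcj'⟩ => ?_
  rcases lt_or_gt_of_ne (Fin.val_ne_of_ne hcj) with h | h
  · rw [hM i c (by omega), zero_mul]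
  · rw [hN c j (by have := Fin.val_ne_of_ne hcj'; omega), mul_zero]

theorem mul_mul_apply_of_lowerBandwidthLE_one (hM : M.LowerBandwidthLE 1)
    (hN : N.LowerBandwidthLE 1) (hP : P.LowerBandwidthLE 1) {i₂ i₁ i₀ : Fin m}
    (h₂ : i₂.val = i₁.val + 1) (h₁ : i₁.val = i₀.val + 1) :
    (M * N * P) i₂ i₀ = M i₂ i₁ * N i₁ i₀ * P i₀ i₀ + M i₂ i₁ * N i₁ i₁ * P i₁ i₀ +
      M i₂ i₂ * N i₂ i₁ * P i₁ i₀ := by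
  rw [(hM.mul hN).mul_apply_of_val_eq_add_one hP h₂ h₁, hM.mul_apply_of_val_eq hN h₂ h₁,
    hM.mul_apply_of_val_eq_add_one (a := 0) hN rfl h₂, add_mul, add_assoc]

end Semiring

theorem askeyWilson_apply_of_lowerBandwidthLE_one [CommRing R]
    {M N : Matrix (Fin m) (Fin m) R} (hM : M.LowerBandwidthLE 1) (hN : N.LowerBandwidthLE 1)
    {β ρ ω η : R}
    (h : M ^ 2 * N - β • (M * N * M) + N * M ^ 2 - ρ • N = ω • M + η • (1 : Matrix _ _ R))
    {i₂ i₁ i₀ : Fin m} (h₂ : i₂.val = i₁.val + 1) (h₁ : i₁.val = i₀.val + 1) :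
    (M i₂ i₁ * M i₁ i₀ * N i₀ i₀ + M i₂ i₁ * M i₁ i₁ * N i₁ i₀ + M i₂ i₂ * M i₂ i₁ * N i₁ i₀)
      - β * (M i₂ i₁ * N i₁ i₀ * M i₀ i₀ + M i₂ i₁ * N i₁ i₁ * M i₁ i₀ +
        M i₂ i₂ * N i₂ i₁ * M i₁ i₀)
      + (N i₂ i₁ * M i₁ i₀ * M i₀ i₀ + N i₂ i₁ * M i₁ i₁ * M i₁ i₀ +
        N i₂ i₂ * M i₂ i₁ * M i₁ i₀) = 0 := by
  have h' := congr_fun₂ h i₂ i₀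
  rw [pow_two, ← Matrix.mul_assoc N] at h'
  simp only [sub_apply, add_apply, smul_apply, smul_eq_mul,
    mul_mul_apply_of_lowerBandwidthLE_one hM hM hN h₂ h₁,
    mul_mul_apply_of_lowerBandwidthLE_one hM hN hM h₂ h₁,
    mul_mul_apply_of_lowerBandwidthLE_one hN hM hM h₂ h₁,
    hN i₂ i₀ (by omega), hM i₂ i₀ (by omega),
    one_apply_ne (Fin.ne_of_val_ne (by omega) : i₂ ≠ i₀)] at h'
  linear_combination h'

end Matrix

theorem eq_of_second_order_recurrence {F : Type*} [Field F] {u v : ℕ → F} {c₀ c₁ c₂ : F}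
    (hc₂ : c₂ ≠ 0) {d : ℕ}
    (hu : ∀ k, k + 2 ≤ d → c₂ * u (k + 2) = c₁ * u (k + 1) + c₀ * u k)
    (hv : ∀ k, k + 2 ≤ d → c₂ * v (k + 2) = c₁ * v (k + 1) + c₀ * v k)
    (h₀ : u 0 = v 0) (h₁ : u 1 = v 1) : ∀ i ≤ d, u i = v i := by
  intro i
  induction i using Nat.twoStepInduction with
  | zero => exact fun _ => h₀
  | one => exact fun _ => h₁
  | more k ih₀ ih₁ =>
    intro hk
    apply mul_left_cancel₀ hc₂
    rw [hu k hk, hv k hk, ih₀ (by omega), ih₁ (by omega)]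

namespace AskeyWilson

variable {F : Type*} [Field F]

theorem eigenvalue_eq (a a' : F) {q : F} (hq : q ≠ 0) (d : ℕ) (i : ℤ) :
    a * q ^ (2 * i - (d : ℤ)) + a' * q ^ ((d : ℤ) - 2 * i) =
      a * q ^ (-(d : ℤ)) * (q ^ 2) ^ i + a' * q ^ d * (q ^ 2) ^ (-i) := by
  rw [← zpow_natCast q d, ← zpow_natCast q 2, ← zpow_mul, ← zpow_mul, mul_assoc, mul_assoc,
    ← zpow_add₀ hq, ← zpow_add₀ hq]
  ring_nf

theorem three_term_of_eq_zpow {θ : ℤ → F} {s α α' : F} (hs : s ≠ 0)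
    (hθ : ∀ i, θ i = α * s ^ i + α' * s ^ (-i)) (i : ℤ) :
    θ i + θ (i + 2) = (s + s⁻¹) * θ (i + 1) := by
  simp only [hθ, neg_add, zpow_add₀ hs, zpow_neg]
  field_simp
  ring

theorem succ_eq_sq_mul_of_eq_zpow {z : ℕ → F} {q : F} (hq : q ≠ 0) {d : ℕ}
    (hz : ∀ i : ℕ, 1 ≤ i → i ≤ d → z i = z 1 * q ^ ((2 : ℤ) - 2 * (i : ℤ))) {k : ℕ}
    (hk : k + 2 ≤ d) : z (k + 1) = q ^ 2 * z (k + 2) := by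
  rw [hz _ (by omega) (by omega), hz _ (by omega) hk, ← zpow_ofNat, mul_left_comm,
    ← zpow_add₀ hq]
  push_cast
  ring_nf

def closedForm (s c c' : F) (i : ℕ) : F :=
  s⁻¹ ^ i * c - c' * (s⁻¹ ^ i - s⁻¹ ^ (2 * i))

theorem closedForm_recurrence {s : F} (hs : s ≠ 0) (c c' : F) (k : ℕ) :
    s ^ 3 * closedForm s c c' (k + 2) =
      (s ^ 2 + s) * closedForm s c c' (k + 1) - closedForm s c c' k := by
  simp only [closedForm, pow_add, pow_mul]
  field_simp
  ring

theorem closedForm_eq_zpow {q : F} (hq : q ≠ 0) (x₀ a' z₁ : F) (d i : ℕ) :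
    closedForm (q ^ 2) x₀ (a' * q ^ d * z₁ * (q ^ 2 + 1)) i =
      q ^ (-2 * (i : ℤ)) * x₀ - a' * z₁ * q ^ ((d : ℤ) - 3 * (i : ℤ) + 1) * (q + q⁻¹) *
        (q ^ (i : ℤ) - q ^ (-(i : ℤ))) := by
  rw [closedForm, zpow_add₀ hq, zpow_sub₀ hq, neg_mul, zpow_neg, zpow_neg, zpow_mul, zpow_mul]
  simp only [zpow_natCast, zpow_ofNat, inv_pow, ← pow_mul]
  field_simp
  ring

theorem recurrence_of_entry {s β θ₀ θ₁ θ₂ x₀ x₁ x₂ z₁ z₂ : F} (hs : s ≠ 0) (hz₂ : z₂ ≠ 0)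
    (hβ : β = s + s⁻¹) (hθ : θ₀ + θ₂ = β * θ₁) (hz : z₁ = s * z₂)
    (h : z₂ * z₁ * θ₀ + z₂ * x₁ + x₂ * z₂ - β * (z₂ * x₀ + z₂ * θ₁ * z₁ + x₂ * z₁) +
      (z₁ * x₀ + x₁ * z₁ + θ₂ * z₂ * z₁) = 0) :
    s ^ 3 * x₂ = (s ^ 2 + s) * x₁ - x₀ := by
  subst hβ hz
  have key : z₂ * (s ^ 3 * x₂ - (s ^ 2 + s) * x₁ + x₀) = 0 := by
    field_simp at h hθ
    linear_combination (-1) * h + z₂ ^ 2 * s * hθ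
  linear_combination (mul_eq_zero.mp key).resolve_left hz₂

theorem initial_of_entry {θ : ℤ → F} {s α α' β x₀ x₁ x₂ z₁ z₂ : F} (hs : s ≠ 0)
    (hs₃ : s ^ 3 ≠ 1) (hθ : ∀ i, θ i = α * s ^ i + α' * s ^ (-i)) (hβ : β = s + s⁻¹)
    (hz : z₁ = s * z₂) (hrec : s ^ 3 * x₂ = (s ^ 2 + s) * x₁ - x₀)
    (h : x₀ + θ 1 * z₁ + θ 2 * z₁ - β * (z₁ * θ 0 + x₁ + θ 2 * z₂) +
      (z₂ * θ 0 + z₂ * θ 1 + x₂) = 0) :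
    x₁ = closedForm s x₀ (α' * z₁ * (s + 1)) 1 := by
  subst hβ hz
  simp only [hθ, neg_zero, zpow_neg, zpow_ofNat] at h
  have key : (s ^ 3 - 1) * (s * x₁ - x₀ + α' * z₂ * (s ^ 2 - 1)) = 0 := by
    field_simp at h
    linear_combination -h + hrec
  have hx₁ := (mul_eq_zero.mp key).resolve_left (sub_ne_zero.mpr hs₃)
  simp only [closedForm, pow_one, mul_one, inv_pow]
  field_simp
  linear_combination hx₁

end AskeyWilson

open AskeyWilson

theorem stmt15_general {F : Type*} [Field F] {d : ℕ} (hd : 3 ≤ d)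
    (q a a' : F) (hq : q ≠ 0)
    (hqru : ∀ n : ℕ, 1 ≤ n → q ^ n ≠ 1)
    (θ : ℤ → F)
    (hθ : ∀ i : ℤ, θ i = a * q ^ (2 * i - (d : ℤ)) + a' * q ^ ((d : ℤ) - 2 * i))
    (β ρ ρs ω η ηs : F)
    (hβ : β = q ^ (2 : ℤ) + q ^ (-2 : ℤ))
    (x y z : ℕ → F)
    (hyz : ∀ i : ℕ, 1 ≤ i → i ≤ d → y i * z i ≠ 0)
    (A As : Matrix (Fin (d + 1)) (Fin (d + 1)) F)
    (hA : ∀ i j : Fin (d + 1), A i j =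
      if (i : ℕ) = (j : ℕ) then θ (i : ℕ)
      else if (i : ℕ) = (j : ℕ) + 1 then 1 else 0)
    (hAs : ∀ i j : Fin (d + 1), As i j =
      if (i : ℕ) = (j : ℕ) then x (i : ℕ)
      else if (i : ℕ) = (j : ℕ) + 1 then z (i : ℕ)
      else if (j : ℕ) = (i : ℕ) + 1 then y (j : ℕ) else 0)
    (hAW1 : A ^ 2 * As - β • (A * As * A) + As * A ^ 2 - ρ • As =
      ω • A + η • (1 : Matrix (Fin (d + 1)) (Fin (d + 1)) F))
    (hAW2 : As ^ 2 * A - β • (As * A * As) + A * As ^ 2 - ρs • A =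
      ω • As + ηs • (1 : Matrix (Fin (d + 1)) (Fin (d + 1)) F))
    (hz : ∀ i : ℕ, 1 ≤ i → i ≤ d → z i = z 1 * q ^ ((2 : ℤ) - 2 * (i : ℤ))) :
    ∀ i : ℕ, i ≤ d →
      x i = q ^ (-2 * (i : ℤ)) * x 0 -
        a' * z 1 * q ^ ((d : ℤ) - 3 * (i : ℤ) + 1) * (q + q⁻¹) *
          (q ^ (i : ℤ) - q ^ (-(i : ℤ))) := by
  set s := q ^ 2
  have hs : s ≠ 0 := pow_ne_zero 2 hq
  have hs₃ : s ^ 3 ≠ 1 := by rw [← pow_mul]; exact hqru 6 (by norm_num)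
  have hβ' : β = s + s⁻¹ := by rw [hβ, zpow_neg, zpow_ofNat]
  have hθ' : ∀ i : ℤ, θ i = a * q ^ (-(d : ℤ)) * s ^ i + a' * q ^ d * s ^ (-i) :=
    fun i => (hθ i).trans (eigenvalue_eq a a' hq d i)
  have hz₁ : z 1 ≠ 0 := right_ne_zero_of_mul (hyz 1 le_rfl (by omega))
  have hA_band : A.LowerBandwidthLE 1 := fun i j hij => by
    rw [hA, if_neg (by omega), if_neg (by omega)]
  have hAs_band : As.LowerBandwidthLE 1 := fun i j hij => by
    rw [hAs, if_neg (by omega), if_neg (by omega), if_neg (by omega)]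
  have hrec : ∀ k, k + 2 ≤ d → s ^ 3 * x (k + 2) = (s ^ 2 + s) * x (k + 1) - x k := by
    intro k hk
    have E := Matrix.askeyWilson_apply_of_lowerBandwidthLE_one hAs_band hA_band hAW2
      (i₂ := ⟨k + 2, by omega⟩) (i₁ := ⟨k + 1, by omega⟩) (i₀ := ⟨k, by omega⟩) rfl rfl
    have hθk : θ k + θ (k + 2) = β * θ (k + 1) := hβ' ▸ three_term_of_eq_zpow hs hθ' k
    have hz₂ : z (k + 2) ≠ 0 := by
      rw [hz _ (by omega) hk]; exact mul_ne_zero hz₁ (zpow_ne_zero _ hq)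
    exact recurrence_of_entry hs hz₂ hβ' hθk (succ_eq_sq_mul_of_eq_zpow hq hz hk)
      (by simpa [hA, hAs] using E)
  have hx₁ : x 1 = closedForm s (x 0) (a' * q ^ d * z 1 * (s + 1)) 1 := by
    have E := Matrix.askeyWilson_apply_of_lowerBandwidthLE_one hA_band hAs_band hAW1
      (i₂ := ⟨2, by omega⟩) (i₁ := ⟨1, by omega⟩) (i₀ := ⟨0, by omega⟩) rfl rfl
    exact initial_of_entry hs hs₃ hθ' hβ' (succ_eq_sq_mul_of_eq_zpow hq hz (k := 0) (by omega))
      (hrec 0 (by omega)) (by simpa [hA, hAs] using E)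
  intro i hi
  rw [← closedForm_eq_zpow hq]
  exact eq_of_second_order_recurrence (c₀ := -1) (c₁ := s ^ 2 + s) (pow_ne_zero 3 hs)
    (fun k hk => by linear_combination hrec k hk)
    (fun k _ => by linear_combination closedForm_recurrence hs _ _ k)
    (by simp [closedForm]) hx₁ i hi

/-- stmt15 of the paper, in the Askey–Wilson setting. -/
theorem stmt15 {F : Type*} [Field F] [IsAlgClosed F] {d : ℕ} (hd : 3 ≤ d)
    (q a a' b b' ξ : F) (hq : q ≠ 0)
    (hqru : ∀ n : ℕ, 1 ≤ n → q ^ n ≠ 1)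
    (θ : ℤ → F)
    (hθ : ∀ i : ℤ, θ i = a * q ^ (2 * i - (d : ℤ)) + a' * q ^ ((d : ℤ) - 2 * i))
    (hθdist : ∀ i j : ℕ, i ≤ d → j ≤ d → i ≠ j → θ i ≠ θ j)
    (β ρ ρs ω η ηs : F)
    (hβ : β = q ^ (2 : ℤ) + q ^ (-2 : ℤ))
    (hρ : ρ = -(a * a') * (q ^ (2 : ℤ) - q ^ (-2 : ℤ)) ^ 2)
    (hρs : ρs = -(b * b') * (q ^ (2 : ℤ) - q ^ (-2 : ℤ)) ^ 2)
    (hω : ω = (q - q⁻¹) ^ 2 *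
      ((q ^ ((d : ℤ) + 1) + q ^ (-(d : ℤ) - 1)) * ξ - (a + a') * (b + b')))
    (hη : η = -((q - q⁻¹) * (q ^ (2 : ℤ) - q ^ (-2 : ℤ)) *
      ((a + a') * ξ - a * a' * (b + b') * (q ^ ((d : ℤ) + 1) + q ^ (-(d : ℤ) - 1)))))
    (hηs : ηs = -((q - q⁻¹) * (q ^ (2 : ℤ) - q ^ (-2 : ℤ)) *
      ((b + b') * ξ - b * b' * (a + a') * (q ^ ((d : ℤ) + 1) + q ^ (-(d : ℤ) - 1)))))
    (x y z : ℕ → F)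
    (hyz : ∀ i : ℕ, 1 ≤ i → i ≤ d → y i * z i ≠ 0)
    (hy0 : y 0 = 0) (hyd1 : y (d + 1) = 0)
    (A As : Matrix (Fin (d + 1)) (Fin (d + 1)) F)
    (hA : ∀ i j : Fin (d + 1), A i j =
      if (i : ℕ) = (j : ℕ) then θ (i : ℕ)
      else if (i : ℕ) = (j : ℕ) + 1 then 1 else 0)
    (hAs : ∀ i j : Fin (d + 1), As i j =
      if (i : ℕ) = (j : ℕ) then x (i : ℕ)
      else if (i : ℕ) = (j : ℕ) + 1 then z (i : ℕ)
      else if (j : ℕ) = (i : ℕ) + 1 then y (j : ℕ) else 0)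
    (hAW1 : A ^ 2 * As - β • (A * As * A) + As * A ^ 2 - ρ • As =
      ω • A + η • (1 : Matrix (Fin (d + 1)) (Fin (d + 1)) F))
    (hAW2 : As ^ 2 * A - β • (As * A * As) + A * As ^ 2 - ρs • A =
      ω • As + ηs • (1 : Matrix (Fin (d + 1)) (Fin (d + 1)) F))
    (hz : ∀ i : ℕ, 1 ≤ i → i ≤ d → z i = z 1 * q ^ ((2 : ℤ) - 2 * (i : ℤ))) :
    ∀ i : ℕ, i ≤ d →
      x i = q ^ (-2 * (i : ℤ)) * x 0 -
        a' * z 1 * q ^ ((d : ℤ) - 3 * (i : ℤ) + 1) * (q + q⁻¹) *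
          (q ^ (i : ℤ) - q ^ (-(i : ℤ))) :=
  stmt15_general hd q a a' hq hqru θ hθ β ρ ρs ω η ηs hβ x y z hyz A As hA hAs hAW1 hAW2 hz
end
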